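/- arXiv:2305.16569 — 11 statements merged into one kernel-verified Lean document; each statement's English description precedes it below -/
import Mathlib

section
/- For every real number γ with 0 < γ < 1 and every natural number k, γ^k / (∑_{i=0}^{k} γ^i) ≤ ((γ⁻¹ - γ)(1 + γ - γ^(k+1)))/((γ^(k+1))⁻¹ - γ^(k+1)) and ((γ⁻¹ - γ)(1 + γ - γ^(k+1)))/((γ^(k+1))⁻¹ - γ^(k+1)) ≤ 4 γ^k / (∑_{i=0}^{k} γ^i). -/
/-!
Write `t = γ^(k+1)`. Summing the geometric series, `∑_{i ≤ k} γ^i = (1 - t)/(1 - γ)`, the Anc-VI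
rate equals the lower bound `γ^k / ∑_{i ≤ k} γ^i` times `(1 + γ)(1 + γ - t)/(1 + t)`, and since
`0 < t ≤ γ < 1` this factor lies between `1` and `4`.
-/

lemma ancVI_rate_eq_mul_lower_bound (γ : ℝ) (hγ0 : 0 < γ) (hγ1 : γ ≠ 1) (k : ℕ) :
    ((γ⁻¹ - γ) * (1 + γ - γ^(k+1))) / ((γ^(k+1))⁻¹ - γ^(k+1))
      = γ^k / (∑ i ∈ Finset.range (k+1), γ^i)
        * ((1 + γ) * (1 + γ - γ^(k+1)) / (1 + γ^(k+1))) := by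
  have ht0 : 0 < γ ^ (k+1) := pow_pos hγ0 _
  have ht1 : γ ^ (k+1) ≠ 1 := (pow_eq_one_iff_of_nonneg hγ0.le k.succ_ne_zero).not.mpr hγ1
  have hk : γ ^ k = γ ^ (k+1) / γ := by field_simp; ring
  rw [geom_sum_eq hγ1, hk]
  generalize γ ^ (k+1) = t at *
  have h1t : 1 + t ≠ 0 := by positivity
  have hinv : t⁻¹ - t = (1 - t) * (1 + t) / t := by field_simp; ring
  rw [hinv]
  field_simp
  ring

lemma one_le_ratio_le_four {γ t : ℝ} (ht0 : 0 ≤ t) (htγ : t ≤ γ) (hγ1 : γ ≤ 1) :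
    1 ≤ (1 + γ) * (1 + γ - t) / (1 + t) ∧ (1 + γ) * (1 + γ - t) / (1 + t) ≤ 4 := by
  have ht : 0 < 1 + t := by linarith
  rw [le_div_iff₀ ht, div_le_iff₀ ht]
  constructor <;> nlinarith

theorem stmt_2 (γ : ℝ) (hγ0 : 0 < γ) (hγ1 : γ < 1) (k : ℕ) :
    γ^k / (∑ i ∈ Finset.range (k+1), γ^i)
        ≤ ((γ⁻¹ - γ) * (1 + γ - γ^(k+1))) / ((γ^(k+1))⁻¹ - γ^(k+1)) ∧
    ((γ⁻¹ - γ) * (1 + γ - γ^(k+1))) / ((γ^(k+1))⁻¹ - γ^(k+1))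
        ≤ 4 * γ^k / (∑ i ∈ Finset.range (k+1), γ^i) := by
  obtain ⟨hlow, hup⟩ := one_le_ratio_le_four (pow_nonneg hγ0.le (k+1))
    (pow_le_of_le_one hγ0.le hγ1.le k.succ_ne_zero) hγ1.le
  have hbound : 0 ≤ γ^k / (∑ i ∈ Finset.range (k+1), γ^i) := by positivity
  rw [ancVI_rate_eq_mul_lower_bound γ hγ0 hγ1.ne k, mul_div_assoc (4 : ℝ), mul_comm 4]
  exact ⟨le_mul_of_one_le_right hbound hlow, mul_le_mul_of_nonneg_left hup hbound⟩
end

section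
/- Let T : ℝⁿ → ℝⁿ be a γ-contraction in the sup-norm with 0 < γ < 1 and fixed point U*. Define β_k = 1/(∑_{i=0}^{k} γ^{-2i}) and the Halpern/anchored iteration U^k = β_k U^0 + (1 - β_k) T U^{k-1} for k ≥ 1. Then for all k, ‖U^k - U*‖_∞ ≤ ‖U^0 - U*‖_∞. -/
open Finset Metric

/- The anchored iterate is a convex combination of the anchor `U 0` and `T (U k)`. Since `T` is
nonexpansive about its fixed point `U*`, it maps the closed ball around `U*` of radius
`‖U 0 - U*‖` into itself, and this ball is convex and contains the anchor, so by induction every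
iterate stays in it. -/

lemma inv_sum_range_inv_pow_two_mul_mem_Icc (γ : ℝ) (k : ℕ) :
    (∑ i ∈ range (k + 1), (γ ^ (2 * i))⁻¹)⁻¹ ∈ Set.Icc (0 : ℝ) 1 := by
  have hterm : ∀ i, 0 ≤ (γ ^ (2 * i))⁻¹ := fun i => by
    rw [pow_mul]; positivity
  have hsum : 1 ≤ ∑ i ∈ range (k + 1), (γ ^ (2 * i))⁻¹ := by
    rw [sum_range_succ']
    simpa using sum_nonneg fun i _ => hterm (i + 1)
  exact ⟨by positivity, inv_le_one_of_one_le₀ hsum⟩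

lemma mapsTo_closedBall_of_le_one {E : Type*} [SeminormedAddCommGroup E] {T : E → E} {γ : ℝ}
    (hγ : γ ≤ 1) (hT : ∀ x y, ‖T x - T y‖ ≤ γ * ‖x - y‖) {p : E} (hp : T p = p) (r : ℝ) :
    Set.MapsTo T (closedBall p r) (closedBall p r) := by
  intro x hx
  rw [mem_closedBall, dist_eq_norm] at hx ⊢
  calc ‖T x - p‖ = ‖T x - T p‖ := by rw [hp]
    _ ≤ γ * ‖x - p‖ := hT x p
    _ ≤ 1 * ‖x - p‖ := by gcongr
    _ ≤ r := by rwa [one_mul]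

lemma halpern_mem_of_convex {E : Type*} [AddCommGroup E] [Module ℝ E] {s : Set E} (hs : Convex ℝ s)
    {T : E → E} (hTs : Set.MapsTo T s s) {β : ℕ → ℝ} (hβ : ∀ k, β k ∈ Set.Icc (0 : ℝ) 1)
    {U : ℕ → E} (hU : ∀ k, U (k + 1) = β (k + 1) • U 0 + (1 - β (k + 1)) • T (U k))
    (h0 : U 0 ∈ s) : ∀ k, U k ∈ s
  | 0 => h0
  | k + 1 => by
    obtain ⟨hβ0, hβ1⟩ := hβ (k + 1)
    rw [hU k]
    exact hs h0 (hTs (halpern_mem_of_convex hs hTs hβ hU h0 k)) hβ0 (by linarith) (by ring)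

theorem stmt_4_general (n : ℕ) (γ : ℝ) (hγ1 : γ < 1)
    (T : (Fin n → ℝ) → (Fin n → ℝ))
    (hT : ∀ x y : Fin n → ℝ, ‖T x - T y‖ ≤ γ * ‖x - y‖)
    (Ustar : Fin n → ℝ) (hfix : T Ustar = Ustar)
    (β : ℕ → ℝ) (hβ : ∀ k, β k = (∑ i ∈ Finset.range (k+1), (γ^(2*i))⁻¹)⁻¹)
    (U : ℕ → Fin n → ℝ)
    (hU : ∀ k : ℕ, U (k+1) = β (k+1) • U 0 + (1 - β (k+1)) • T (U k)) :
    ∀ k, ‖U k - Ustar‖ ≤ ‖U 0 - Ustar‖ := by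
  intro k
  have hmem := halpern_mem_of_convex (convex_closedBall Ustar ‖U 0 - Ustar‖)
    (mapsTo_closedBall_of_le_one hγ1.le hT hfix _)
    (fun k => hβ k ▸ inv_sum_range_inv_pow_two_mul_mem_Icc γ k) hU
    (by rw [mem_closedBall, dist_eq_norm]) k
  rwa [mem_closedBall, dist_eq_norm] at hmem

theorem stmt_4 (n : ℕ) (hn : 0 < n) (γ : ℝ) (hγ0 : 0 < γ) (hγ1 : γ < 1)
    (T : (Fin n → ℝ) → (Fin n → ℝ))
    (hT : ∀ x y : Fin n → ℝ, ‖T x - T y‖ ≤ γ * ‖x - y‖)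
    (Ustar : Fin n → ℝ) (hfix : T Ustar = Ustar)
    (β : ℕ → ℝ) (hβ : ∀ k, β k = (∑ i ∈ Finset.range (k+1), (γ^(2*i))⁻¹)⁻¹)
    (U : ℕ → Fin n → ℝ)
    (hU : ∀ k : ℕ, U (k+1) = β (k+1) • U 0 + (1 - β (k+1)) • T (U k)) :
    ∀ k, ‖U k - Ustar‖ ≤ ‖U 0 - Ustar‖ :=
  stmt_4_general n γ hγ1 T hT Ustar hfix β hβ U hU
end

section
/- Let T : ℝⁿ → ℝⁿ be nonexpansive in the sup-norm and order-monotone (U ≤ V componentwise implies T U ≤ T V). Let β_k = 1/(k+1) and define U^k = β_k U^0 + (1 - β_k) T U^{k-1} for k ≥ 1. If U^0 ≤ T U^0 componentwise, then for all k ≥ 1: U^{k-1} ≤ U^k ≤ T U^{k-1} ≤ T U^k componentwise. -/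
/-!
For weights `β k` in `[0, 1]` that decrease, induction gives `U 0 ≤ T (U k)`, `U k ≤ U (k+1)`
and `U (k+1) ≤ T (U k)`: a convex combination of `U 0 ≤ T (U k)` lies between them, and passing
from `U (k+1)` to `U (k+2)` moves weight away from the smaller vector `U 0` and replaces `T (U k)`
by `T (U (k+1))`, which is larger by monotonicity.
-/

section ConvexCombination

variable {𝕜 E : Type*} [Ring 𝕜] [PartialOrder 𝕜]
  [AddCommGroup E] [PartialOrder E] [IsOrderedAddMonoid E] [Module 𝕜 E] [PosSMulMono 𝕜 E]
  {x y y' : E} {a b : 𝕜}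

lemma le_smul_add_one_sub_smul [IsOrderedRing 𝕜] (hxy : x ≤ y) (hb : b ≤ 1) :
    x ≤ b • x + (1 - b) • y :=
  calc x = b • x + (1 - b) • x := smul_add_one_sub_smul.symm
    _ ≤ b • x + (1 - b) • y := by gcongr

lemma smul_add_one_sub_smul_le (hxy : x ≤ y) (hb : 0 ≤ b) : b • x + (1 - b) • y ≤ y :=
  calc b • x + (1 - b) • y ≤ b • y + (1 - b) • y := by gcongr
    _ = y := smul_add_one_sub_smul

lemma smul_add_one_sub_smul_le_smul_add_one_sub_smul [IsOrderedRing 𝕜] (hxy : x ≤ y)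
    (hyy' : y ≤ y') (hba : b ≤ a) (hb : b ≤ 1) : a • x + (1 - a) • y ≤ b • x + (1 - b) • y' :=
  calc a • x + (1 - a) • y ≤ a • x + (1 - a) • y + (a - b) • (y - x) :=
        le_add_of_nonneg_right (smul_nonneg (sub_nonneg.2 hba) (sub_nonneg.2 hxy))
    _ = b • x + (1 - b) • y := by simp only [sub_smul, smul_sub]; abel
    _ ≤ b • x + (1 - b) • y' := by gcongr

end ConvexCombination

section AnchoredIteration

variable {𝕜 E : Type*} [Ring 𝕜] [PartialOrder 𝕜] [IsOrderedRing 𝕜]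
  [AddCommGroup E] [PartialOrder E] [IsOrderedAddMonoid E] [Module 𝕜 E] [PosSMulMono 𝕜 E]
  {T : E → E} {β : ℕ → 𝕜} {U : ℕ → E}

lemma anchoredIteration_invariant (hT : Monotone T) (hβ : Antitone β) (hβ0 : ∀ k, 0 ≤ β k)
    (hβ1 : ∀ k, β k ≤ 1) (hU : ∀ k, U (k + 1) = β (k + 1) • U 0 + (1 - β (k + 1)) • T (U k))
    (h0 : U 0 ≤ T (U 0)) (k : ℕ) :
    U 0 ≤ T (U k) ∧ U k ≤ U (k + 1) ∧ U (k + 1) ≤ T (U k) := by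
  induction k with
  | zero =>
    rw [hU 0]
    exact ⟨h0, le_smul_add_one_sub_smul h0 (hβ1 1), smul_add_one_sub_smul_le h0 (hβ0 1)⟩
  | succ k ih =>
    obtain ⟨h0T, hle, hleT⟩ := ih
    have hTle : T (U k) ≤ T (U (k + 1)) := hT hle
    have h0T' : U 0 ≤ T (U (k + 1)) := h0T.trans hTle
    refine ⟨h0T', ?_, ?_⟩
    · rw [hU k, hU (k + 1)]
      exact smul_add_one_sub_smul_le_smul_add_one_sub_smul h0T hTle
        (hβ (Nat.le_succ _)) (hβ1 _)
    · rw [hU (k + 1)]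
      exact smul_add_one_sub_smul_le h0T' (hβ0 _)

end AnchoredIteration

theorem stmt_5_general (n : ℕ)
    (T : (Fin n → ℝ) → (Fin n → ℝ))
    (hmono : ∀ x y : Fin n → ℝ, x ≤ y → T x ≤ T y)
    (β : ℕ → ℝ) (hβ : ∀ k, β k = 1 / (k+1 : ℝ))
    (U : ℕ → Fin n → ℝ)
    (hU : ∀ k : ℕ, U (k+1) = β (k+1) • U 0 + (1 - β (k+1)) • T (U k))
    (h0 : U 0 ≤ T (U 0)) :
    ∀ k : ℕ, 1 ≤ k →
      U (k-1) ≤ U k ∧ U k ≤ T (U (k-1)) ∧ T (U (k-1)) ≤ T (U k) := by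
  obtain rfl : β = fun k : ℕ => 1 / (k + 1 : ℝ) := funext hβ
  have hβ_anti : Antitone fun k : ℕ => 1 / (k + 1 : ℝ) := fun i j hij => by dsimp only; gcongr
  have hβ_le_one (k : ℕ) : 1 / (k + 1 : ℝ) ≤ 1 := by
    rw [div_le_one (by positivity)]; linarith [k.cast_nonneg (α := ℝ)]
  intro k hk
  obtain ⟨m, rfl⟩ := Nat.exists_eq_add_of_le' hk
  obtain ⟨-, hle, hleT⟩ := anchoredIteration_invariant (fun x y h => hmono x y h) hβ_anti
    (fun k => by positivity) hβ_le_one hU h0 m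
  exact ⟨hle, hleT, hmono _ _ hle⟩

theorem stmt_5 (n : ℕ) (hn : 0 < n)
    (T : (Fin n → ℝ) → (Fin n → ℝ))
    (hT : ∀ x y : Fin n → ℝ, ‖T x - T y‖ ≤ ‖x - y‖)
    (hmono : ∀ x y : Fin n → ℝ, x ≤ y → T x ≤ T y)
    (β : ℕ → ℝ) (hβ : ∀ k, β k = 1 / (k+1 : ℝ))
    (U : ℕ → Fin n → ℝ)
    (hU : ∀ k : ℕ, U (k+1) = β (k+1) • U 0 + (1 - β (k+1)) • T (U k))
    (h0 : U 0 ≤ T (U 0)) :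
    ∀ k : ℕ, 1 ≤ k →
      U (k-1) ≤ U k ∧ U k ≤ T (U (k-1)) ∧ T (U (k-1)) ≤ T (U k) :=
  stmt_5_general n T hmono β hβ U hU h0
end

section
/- Let T : ℝⁿ → ℝⁿ be nonexpansive in the sup-norm, order-monotone, and order-convex in the sense that for all 0 ≤ α ≤ 1 and all U, V, W with U - (1-α)V - αW ≤ B componentwise for some B, one has T U - (1-α) T V - α T W ≤ P B for some componentwise-monotone nonexpansive linear map P. Suppose T has a fixed point U* with U^0 ≤ U*, and U^0 ≤ T U^0. Define β_k = 1/(k+1) and U^k = β_k U^0 + (1-β_k) T U^{k-1}. Then ‖T U^k - U^k‖_∞ ≤ ‖U^0 - U*‖_∞ / (k+1) for all k ≥ 0. -/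
/-!
Two inductions. Since `U⁰ ≤ T U⁰` and `T` is monotone, the iterates increase and stay below their
images, so `0 ≤ T Uᵏ - Uᵏ`. For the upper bound, `Uᵏ⁺¹ - (1-β)Uᵏ - βU* = (1-β)(T Uᵏ - Uᵏ) - β(U* - U⁰)`
with `β = βₖ₊₁`; order-convexity applied to `(Uᵏ⁺¹, Uᵏ, U*)` bounds `T Uᵏ⁺¹ - (1-β) T Uᵏ - βU*` by the
image of this vector under a monotone linear map, which is nonpositive by the induction hypothesis
`T Uᵏ - Uᵏ ≤ βₖ (U* - U⁰)` and the identity `(1 - βₖ₊₁) βₖ = βₖ₊₁`. Hence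
`T Uᵏ⁺¹ - Uᵏ⁺¹ ≤ βₖ₊₁ (U* - U⁰)`.
-/

instance Pi.hasSolidNorm {ι α : Type*} [Fintype ι] [NormedAddCommGroup α] [Lattice α]
    [HasSolidNorm α] : HasSolidNorm (ι → α) where
  solid _ y h := (pi_norm_le_iff_of_nonneg (norm_nonneg y)).2 fun i =>
    (norm_le_norm_of_abs_le_abs (h i)).trans (norm_le_pi_norm y i)

section AnchoredIteration

variable {E : Type*} [AddCommGroup E] [Module ℝ E] {T : E → E} {U : ℕ → E} {β : ℕ → ℝ}

variable (hU : ∀ k, U (k + 1) = β (k + 1) • U 0 + (1 - β (k + 1)) • T (U k))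
include hU

theorem anchoredIter_succ_sub_succ (k : ℕ) :
    U (k + 2) - U (k + 1) = (β (k + 1) - β (k + 2)) • (T (U (k + 1)) - U 0)
      + (1 - β (k + 1)) • (T (U (k + 1)) - T (U k)) := by
  rw [hU (k + 1), hU k]
  module

variable [PartialOrder E] [IsOrderedAddMonoid E] [PosSMulMono ℝ E]

theorem anchoredIter_monotone_invariant (hT : Monotone T) (hβ₀ : ∀ k, 0 ≤ β k)
    (hβ₁ : ∀ k, β k ≤ 1) (hβ_anti : Antitone β) (h0 : U 0 ≤ T (U 0)) (k : ℕ) :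
    U 0 ≤ U k ∧ U k ≤ U (k + 1) ∧ U k ≤ T (U k) := by
  have succ_mem_Icc {k : ℕ} (h : U 0 ≤ T (U k)) : U (k + 1) ∈ Set.Icc (U 0) (T (U k)) :=
    hU k ▸ segment_subset_Icc h ⟨_, _, hβ₀ _, sub_nonneg.2 (hβ₁ _), add_sub_cancel _ _, rfl⟩
  induction k with
  | zero => exact ⟨le_rfl, (succ_mem_Icc h0).1, h0⟩
  | succ k ih =>
    obtain ⟨h0k, hkk, hkT⟩ := ih
    have hTT : T (U k) ≤ T (U (k + 1)) := hT hkk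
    have hsuccT : U (k + 1) ≤ T (U (k + 1)) := (succ_mem_Icc (h0k.trans hkT)).2.trans hTT
    have h0succ : U 0 ≤ U (k + 1) := h0k.trans hkk
    refine ⟨h0succ, ?_, hsuccT⟩
    rw [← sub_nonneg, anchoredIter_succ_sub_succ hU]
    have hβk : 0 ≤ β (k + 1) - β (k + 2) := sub_nonneg.2 (hβ_anti (Nat.le_succ _))
    exact add_nonneg (smul_nonneg hβk (sub_nonneg.2 (h0succ.trans hsuccT)))
      (smul_nonneg (sub_nonneg.2 (hβ₁ _)) (sub_nonneg.2 hTT))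

theorem anchoredIter_T_sub_le (hT : Monotone T)
    (hconv : ∀ α : ℝ, 0 ≤ α → α ≤ 1 → ∀ V W X : E, ∃ P : E →ₗ[ℝ] E,
      Monotone P ∧ T V - (1 - α) • T W - α • T X ≤ P (V - (1 - α) • W - α • X))
    {Ustar : E} (hfix : T Ustar = Ustar) (hinit : U 0 ≤ Ustar)
    (hβ_zero : β 0 = 1) (hβ_succ : ∀ k, (1 - β (k + 1)) * β k = β (k + 1))
    (hβ₀ : ∀ k, 0 ≤ β k) (hβ₁ : ∀ k, β k ≤ 1) (k : ℕ) :
    T (U k) - U k ≤ β k • (Ustar - U 0) := by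
  induction k with
  | zero =>
    rw [hβ_zero, one_smul]
    exact sub_le_sub_right (hfix ▸ hT hinit) _
  | succ k ih =>
    set b := β (k + 1)
    obtain ⟨P, hP, hPle⟩ := hconv b (hβ₀ _) (hβ₁ _) (U (k + 1)) (U k) Ustar
    have hB : U (k + 1) - (1 - b) • U k - b • Ustar
        = (1 - b) • (T (U k) - U k) - b • (Ustar - U 0) := by
      rw [hU k]; module
    have hB_nonpos : U (k + 1) - (1 - b) • U k - b • Ustar ≤ 0 := by
      rw [hB, sub_nonpos]
      calc (1 - b) • (T (U k) - U k) ≤ (1 - b) • β k • (Ustar - U 0) :=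
            smul_le_smul_of_nonneg_left ih (sub_nonneg.2 (hβ₁ _))
        _ = b • (Ustar - U 0) := by rw [smul_smul, hβ_succ k]
    calc T (U (k + 1)) - U (k + 1)
        = (T (U (k + 1)) - (1 - b) • T (U k) - b • T Ustar) + b • (Ustar - U 0) := by
          rw [hfix, hU k]; module
      _ ≤ P (U (k + 1) - (1 - b) • U k - b • Ustar) + b • (Ustar - U 0) := by gcongr
      _ ≤ b • (Ustar - U 0) := add_le_of_nonpos_left (map_zero P ▸ hP hB_nonpos)

end AnchoredIteration

theorem stmt_6_general (n : ℕ)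
    (T : (Fin n → ℝ) → (Fin n → ℝ))
    (hmono : ∀ x y : Fin n → ℝ, x ≤ y → T x ≤ T y)
    (hconv : ∀ α : ℝ, 0 ≤ α → α ≤ 1 → ∀ U V W B : Fin n → ℝ,
      U - (1 - α) • V - α • W ≤ B →
      ∃ P : (Fin n → ℝ) →ₗ[ℝ] (Fin n → ℝ),
        (∀ x y : Fin n → ℝ, x ≤ y → P x ≤ P y) ∧
        (∀ x : Fin n → ℝ, ‖P x‖ ≤ ‖x‖) ∧
        T U - (1 - α) • T V - α • T W ≤ P B)
    (Ustar : Fin n → ℝ) (hfix : T Ustar = Ustar)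
    (U : ℕ → Fin n → ℝ)
    (hinit : U 0 ≤ Ustar) (h0 : U 0 ≤ T (U 0))
    (β : ℕ → ℝ) (hβ : ∀ k, β k = 1 / (k+1 : ℝ))
    (hU : ∀ k : ℕ, U (k+1) = β (k+1) • U 0 + (1 - β (k+1)) • T (U k)) :
    ∀ k : ℕ, ‖T (U k) - U k‖ ≤ ‖U 0 - Ustar‖ / (k+1 : ℝ) := by
  obtain rfl : β = fun k : ℕ => 1 / (k + 1 : ℝ) := funext hβ
  have hT : Monotone T := fun x y => hmono x y
  have hβ₀ (k : ℕ) : (0 : ℝ) ≤ 1 / (k + 1) := by positivity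
  have hβ₁ (k : ℕ) : 1 / (k + 1 : ℝ) ≤ 1 := div_le_one_of_le₀ (by simp) (by positivity)
  have hβ_anti : Antitone fun k : ℕ => 1 / (k + 1 : ℝ) := fun i j hij => by
    dsimp only; gcongr
  have hβ_rec (k : ℕ) :
      (1 - 1 / ((k + 1 : ℕ) + 1 : ℝ)) * (1 / (k + 1)) = 1 / ((k + 1 : ℕ) + 1) := by
    push_cast; field_simp; ring
  intro k
  have hlow := (anchoredIter_monotone_invariant hU hT hβ₀ hβ₁ hβ_anti h0 k).2.2
  have hconv' (α : ℝ) (h₀ : 0 ≤ α) (h₁ : α ≤ 1) (V W X : Fin n → ℝ) :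
      ∃ P : (Fin n → ℝ) →ₗ[ℝ] (Fin n → ℝ),
        Monotone P ∧ T V - (1 - α) • T W - α • T X ≤ P (V - (1 - α) • W - α • X) :=
    (hconv α h₀ h₁ V W X _ le_rfl).imp fun P hP => ⟨fun x y => hP.1 x y, hP.2.2⟩
  have hupp := anchoredIter_T_sub_le hU hT hconv' hfix hinit (by norm_num) hβ_rec hβ₀ hβ₁ k
  calc ‖T (U k) - U k‖ ≤ ‖(1 / (k + 1 : ℝ)) • (Ustar - U 0)‖ := by
        refine norm_le_norm_of_abs_le_abs ?_
        rwa [abs_of_nonneg (sub_nonneg.2 hlow), abs_of_nonneg ((sub_nonneg.2 hlow).trans hupp)]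
    _ = ‖U 0 - Ustar‖ / (k + 1) := by
        rw [norm_smul, norm_sub_rev, Real.norm_of_nonneg (hβ₀ k)]; ring

theorem stmt_6 (n : ℕ) (hn : 0 < n)
    (T : (Fin n → ℝ) → (Fin n → ℝ))
    (hT : ∀ x y : Fin n → ℝ, ‖T x - T y‖ ≤ ‖x - y‖)
    (hmono : ∀ x y : Fin n → ℝ, x ≤ y → T x ≤ T y)
    (hconv : ∀ α : ℝ, 0 ≤ α → α ≤ 1 → ∀ U V W B : Fin n → ℝ,
      U - (1 - α) • V - α • W ≤ B →
      ∃ P : (Fin n → ℝ) →ₗ[ℝ] (Fin n → ℝ),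
        (∀ x y : Fin n → ℝ, x ≤ y → P x ≤ P y) ∧
        (∀ x : Fin n → ℝ, ‖P x‖ ≤ ‖x‖) ∧
        T U - (1 - α) • T V - α • T W ≤ P B)
    (Ustar : Fin n → ℝ) (hfix : T Ustar = Ustar)
    (U : ℕ → Fin n → ℝ)
    (hinit : U 0 ≤ Ustar) (h0 : U 0 ≤ T (U 0))
    (β : ℕ → ℝ) (hβ : ∀ k, β k = 1 / (k+1 : ℝ))
    (hU : ∀ k : ℕ, U (k+1) = β (k+1) • U 0 + (1 - β (k+1)) • T (U k)) :
    ∀ k : ℕ, ‖T (U k) - U k‖ ≤ ‖U 0 - Ustar‖ / (k+1 : ℝ) :=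
  stmt_6_general n T hmono hconv Ustar hfix U hinit h0 β hβ hU
end

section
/- Let P ∈ ℝ^{n×n} be a row-substochastic nonnegative matrix with all row sums ≤ γ, and let T : ℝⁿ → ℝⁿ be defined by T U = P U + r for a fixed vector r. Let U* be a fixed point of T (assumed to exist), β_k = 1/(∑_{i=0}^k γ^{-2i}), and U^k = β_k U^0 + (1-β_k) T U^{k-1}. Then T U^k - U^k = ∑_{i=1}^k (β_i - β_{i-1}(1-β_i)) (∏_{j=i+1}^k (1-β_j)) P^{k-i+1}(U^0 - U*) - β_k (U^0 - U*) + (∏_{j=1}^k (1-β_j)) P^{k+1}(U^0 - U*), where empty products equal 1 and β_0 = 1. -/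
/-!
Write `E = U⁰ - U*`. Since `r = U* - P U*`, the residual of any `V` is `T V - V = P (V - U*) - (V - U*)`,
and the Halpern step `U^{k+1} = β U⁰ + (1 - β) T U^k` turns into the linear recursion
`D_{k+1} = β_{k+1} (P E - E) + (1 - β_{k+1}) P D_k` for the residuals `D_k = T U^k - U^k`,
with `D_0 = P E - E`. The closed form satisfies the same recursion, so the two agree by induction.
-/

open Finset Matrix

variable {ι R : Type*} [Fintype ι] [CommRing R]

section
variable [DecidableEq ι]

/-- The right-hand side of the error identity, with `E = U⁰ - U*`. -/
def halpernResidual (P : Matrix ι ι R) (β : ℕ → R) (E : ι → R) (k : ℕ) : ι → R :=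
  (∑ i ∈ Icc 1 k, ((β i - β (i - 1) * (1 - β i)) * ∏ j ∈ Icc (i + 1) k, (1 - β j))
      • (P ^ (k - i + 1)) *ᵥ E)
    - β k • E + (∏ j ∈ Icc 1 k, (1 - β j)) • (P ^ (k + 1)) *ᵥ E

lemma halpernResidual_zero (P : Matrix ι ι R) {β : ℕ → R} (hβ0 : β 0 = 1) (E : ι → R) :
    halpernResidual P β E 0 = P *ᵥ E - E := by
  simp [halpernResidual, hβ0, neg_add_eq_sub]

lemma halpernResidual_succ (P : Matrix ι ι R) (β : ℕ → R) (E : ι → R) (k : ℕ) :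
    halpernResidual P β E (k + 1)
      = β (k + 1) • (P *ᵥ E - E) + (1 - β (k + 1)) • P *ᵥ halpernResidual P β E k := by
  have hsum : ∑ i ∈ Icc 1 (k + 1),
        ((β i - β (i - 1) * (1 - β i)) * ∏ j ∈ Icc (i + 1) (k + 1), (1 - β j))
          • (P ^ (k + 1 - i + 1)) *ᵥ E
      = (1 - β (k + 1)) • ∑ i ∈ Icc 1 k,
          ((β i - β (i - 1) * (1 - β i)) * ∏ j ∈ Icc (i + 1) k, (1 - β j))
            • P *ᵥ (P ^ (k - i + 1)) *ᵥ E
        + (β (k + 1) - β k * (1 - β (k + 1))) • P *ᵥ E := by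
    rw [sum_Icc_succ_top (by omega), smul_sum]
    congr 1
    · refine sum_congr rfl fun i hi => ?_
      have hik : i ≤ k := (mem_Icc.mp hi).2
      rw [show k + 1 - i + 1 = k - i + 1 + 1 by omega, prod_Icc_succ_top (by omega), smul_smul,
        mulVec_mulVec, ← pow_succ']
      ring_nf
    · simp
  rw [halpernResidual, hsum, prod_Icc_succ_top (by omega), halpernResidual]
  simp only [mulVec_add, mulVec_sub, mulVec_smul, mulVec_sum, mulVec_mulVec, ← pow_succ']
  module

theorem eq_halpernResidual_of_rec (P : Matrix ι ι R) {β : ℕ → R} (hβ0 : β 0 = 1) (E : ι → R)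
    {D : ℕ → ι → R} (h0 : D 0 = P *ᵥ E - E)
    (hrec : ∀ k, D (k + 1) = β (k + 1) • (P *ᵥ E - E) + (1 - β (k + 1)) • P *ᵥ D k) (k : ℕ) :
    D k = halpernResidual P β E k := by
  induction k with
  | zero => rw [h0, halpernResidual_zero P hβ0]
  | succ k ih => rw [hrec, ih, halpernResidual_succ]

end

section
variable {T : (ι → R) → ι → R} {P : Matrix ι ι R} {r : ι → R}

lemma sub_fixedPoint_of_affine (hT : ∀ U, T U = P *ᵥ U + r) {Ustar : ι → R}
    (hfix : T Ustar = Ustar) (U : ι → R) : T U - Ustar = P *ᵥ (U - Ustar) := by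
  have h := hT Ustar
  rw [hfix] at h
  rw [hT, mulVec_sub]
  linear_combination (norm := module) -h

lemma residual_of_affine (hT : ∀ U, T U = P *ᵥ U + r) {Ustar : ι → R}
    (hfix : T Ustar = Ustar) (U : ι → R) : T U - U = P *ᵥ (U - Ustar) - (U - Ustar) := by
  rw [← sub_fixedPoint_of_affine hT hfix]
  abel

lemma residual_halpern_succ (hT : ∀ U, T U = P *ᵥ U + r) {Ustar : ι → R}
    (hfix : T Ustar = Ustar) (β : R) (U₀ U : ι → R) :
    T (β • U₀ + (1 - β) • T U) - (β • U₀ + (1 - β) • T U)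
      = β • (P *ᵥ (U₀ - Ustar) - (U₀ - Ustar)) + (1 - β) • P *ᵥ (T U - U) := by
  rw [residual_of_affine hT hfix, residual_of_affine hT hfix U,
    show β • U₀ + (1 - β) • T U - Ustar = β • (U₀ - Ustar) + (1 - β) • (T U - Ustar) by module,
    sub_fixedPoint_of_affine hT hfix]
  simp only [mulVec_add, mulVec_sub, mulVec_smul]
  module

end

theorem stmt_7_general (n : ℕ) (γ : ℝ)
    (P : Matrix (Fin n) (Fin n) ℝ)
    (r : Fin n → ℝ)
    (T : (Fin n → ℝ) → (Fin n → ℝ))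
    (hTdef : ∀ U, T U = P.mulVec U + r)
    (Ustar : Fin n → ℝ) (hfix : T Ustar = Ustar)
    (β : ℕ → ℝ) (hβ : ∀ k, β k = (∑ i ∈ Finset.range (k+1), (γ^(2*i))⁻¹)⁻¹)
    (U : ℕ → Fin n → ℝ)
    (hU : ∀ k : ℕ, U (k+1) = β (k+1) • U 0 + (1 - β (k+1)) • T (U k)) :
    ∀ k : ℕ,
      T (U k) - U k
        = (∑ i ∈ Finset.Icc 1 k,
            ((β i - β (i-1) * (1 - β i)) * (∏ j ∈ Finset.Icc (i+1) k, (1 - β j)))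
              • (P^(k-i+1)).mulVec (U 0 - Ustar))
          - β k • (U 0 - Ustar)
          + (∏ j ∈ Finset.Icc 1 k, (1 - β j)) • (P^(k+1)).mulVec (U 0 - Ustar) := by
  have hβ0 : β 0 = 1 := by simp [hβ]
  intro k
  refine eq_halpernResidual_of_rec (D := fun k => T (U k) - U k) P hβ0 (U 0 - Ustar)
    (residual_of_affine hTdef hfix (U 0)) (fun k => ?_) k
  rw [hU k]
  exact residual_halpern_succ hTdef hfix _ _ _

theorem stmt_7 (n : ℕ) (hn : 0 < n) (γ : ℝ) (hγ0 : 0 < γ) (hγ1 : γ ≤ 1)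
    (P : Matrix (Fin n) (Fin n) ℝ)
    (hPnonneg : ∀ i j, 0 ≤ P i j)
    (hProw : ∀ i, ∑ j, P i j ≤ γ)
    (r : Fin n → ℝ)
    (T : (Fin n → ℝ) → (Fin n → ℝ))
    (hTdef : ∀ U, T U = P.mulVec U + r)
    (Ustar : Fin n → ℝ) (hfix : T Ustar = Ustar)
    (β : ℕ → ℝ) (hβ : ∀ k, β k = (∑ i ∈ Finset.range (k+1), (γ^(2*i))⁻¹)⁻¹)
    (U : ℕ → Fin n → ℝ)
    (hU : ∀ k : ℕ, U (k+1) = β (k+1) • U 0 + (1 - β (k+1)) • T (U k)) :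
    ∀ k : ℕ,
      T (U k) - U k
        = (∑ i ∈ Finset.Icc 1 k,
            ((β i - β (i-1) * (1 - β i)) * (∏ j ∈ Finset.Icc (i+1) k, (1 - β j)))
              • (P^(k-i+1)).mulVec (U 0 - Ustar))
          - β k • (U 0 - Ustar)
          + (∏ j ∈ Finset.Icc 1 k, (1 - β j)) • (P^(k+1)).mulVec (U 0 - Ustar) :=
  stmt_7_general n γ P r T hTdef Ustar hfix β hβ U hU
end

section
/- Let P ∈ ℝ^{n×n} be a nonnegative matrix with all row sums ≤ γ where 0 < γ < 1, T U = P U + r, and U* the unique fixed point of T. With β_k = 1/(∑_{i=0}^k γ^{-2i}) and U^k = β_k U^0 + (1-β_k) T U^{k-1}, one has ‖T U^k - U^k‖_∞ ≤ ((γ⁻¹ - γ)(1 + 2γ - γ^(k+1)))/((γ^(k+1))⁻¹ - γ^(k+1)) · ‖U^0 - U*‖_∞ for all k ≥ 0. -/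
/-!
Write `d = U⁰ - U*` and `eₖ = T Uᵏ - Uᵏ`. Since `T` is affine with linear part `P`,
`e₀ = P d - d` and `eₖ₊₁ = βₖ₊₁ e₀ + (1 - βₖ₊₁) P eₖ`; with `Sₖ = ∑_{i ≤ k} γ⁻²ⁱ = βₖ⁻¹` this
unrolls to `Sₖ eₖ = ∑_{i ≤ k} γ⁻²ⁱ Pⁱ (P d - d)`. Summation by parts turns the right-hand side into
`γ⁻²ᵏ Pᵏ⁺¹ d - d + ∑_{i < k} (γ⁻²ⁱ - γ⁻²⁽ⁱ⁺¹⁾) Pⁱ⁺¹ d`, all of whose coefficients have a fixed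
sign, so `‖Pⁱ‖_∞ ≤ γⁱ` bounds its norm by `((1 + 2γ) γ⁻ᵏ - γ) ‖d‖`. Dividing by the geometric
sum `Sₖ` gives the rate.
-/

open Finset Matrix

theorem Matrix.norm_mulVec_le_of_nonneg_of_sum_row_le {n : Type*} [Fintype n]
    {P : Matrix n n ℝ} {γ : ℝ} (hP : ∀ i j, 0 ≤ P i j) (hrow : ∀ i, ∑ j, P i j ≤ γ)
    (hγ : 0 ≤ γ) (v : n → ℝ) : ‖P *ᵥ v‖ ≤ γ * ‖v‖ := by
  let _ := Matrix.linftyOpNormedAddCommGroup (m := n) (n := n) (α := ℝ)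
  refine (P.linfty_opNorm_mulVec v).trans (mul_le_mul_of_nonneg_right ?_ (norm_nonneg v))
  rw [linfty_opNorm_def, ← Real.coe_toNNReal γ hγ, NNReal.coe_le_coe]
  refine Finset.sup_le fun i _ => NNReal.coe_le_coe.mp ?_
  simpa [Real.norm_of_nonneg (hP i _), hγ] using hrow i

theorem LinearMap.norm_pow_apply_le {E : Type*} [SeminormedAddCommGroup E] [NormedSpace ℝ E]
    {A : E →ₗ[ℝ] E} {γ : ℝ} (hγ : 0 ≤ γ) (hA : ∀ v, ‖A v‖ ≤ γ * ‖v‖) (i : ℕ) (v : E) :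
    ‖(A ^ i) v‖ ≤ γ ^ i * ‖v‖ := by
  induction i with
  | zero => simp
  | succ i ih =>
    calc ‖(A ^ (i + 1)) v‖ = ‖A ((A ^ i) v)‖ := by rw [pow_succ', Module.End.mul_apply]
      _ ≤ γ * (γ ^ i * ‖v‖) := (hA _).trans (mul_le_mul_of_nonneg_left ih hγ)
      _ = γ ^ (i + 1) * ‖v‖ := by ring

theorem Finset.sum_range_succ_pow_smul_sub {R M : Type*} [CommRing R] [AddCommGroup M]
    [Module R M] (c : R) (f : ℕ → M) (k : ℕ) :
    ∑ i ∈ range (k + 1), c ^ i • (f (i + 1) - f i)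
      = c ^ k • f (k + 1) - f 0 + ∑ i ∈ range k, (c ^ i - c ^ (i + 1)) • f (i + 1) := by
  induction k with
  | zero => simp
  | succ k ih =>
    rw [sum_range_succ, ih, sum_range_succ]
    module

theorem norm_sum_range_succ_pow_smul_sub_le {E : Type*} [SeminormedAddCommGroup E]
    [NormedSpace ℝ E] {c : ℝ} (hc : 1 ≤ c) {f : ℕ → E} {b : ℕ → ℝ} (hf : ∀ i, ‖f i‖ ≤ b i)
    (k : ℕ) :
    ‖∑ i ∈ range (k + 1), c ^ i • (f (i + 1) - f i)‖
      ≤ c ^ k * b (k + 1) + b 0 + ∑ i ∈ range k, (c ^ (i + 1) - c ^ i) * b (i + 1) := by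
  have hc_mono : ∀ i, c ^ i ≤ c ^ (i + 1) := fun i => pow_le_pow_right₀ hc i.le_succ
  rw [sum_range_succ_pow_smul_sub]
  grw [norm_add_le, norm_sub_le, norm_sum_le]
  gcongr with i
  · rw [norm_smul, Real.norm_of_nonneg (by positivity)]
    exact mul_le_mul_of_nonneg_left (hf _) (by positivity)
  · exact hf 0
  · rw [norm_smul, Real.norm_eq_abs, abs_sub_comm, abs_of_nonneg (sub_nonneg.2 (hc_mono i))]
    exact mul_le_mul_of_nonneg_left (hf _) (sub_nonneg.2 (hc_mono i))

theorem anchored_residual_succ {K E : Type*} [CommRing K] [AddCommGroup E] [Module K E]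
    (A : E →ₗ[K] E) (r : E) {T : E → E} (hT : ∀ U, T U = A U + r) {β : ℕ → K} {U : ℕ → E}
    (hU : ∀ k, U (k + 1) = β (k + 1) • U 0 + (1 - β (k + 1)) • T (U k)) (k : ℕ) :
    T (U (k + 1)) - U (k + 1)
      = β (k + 1) • (T (U 0) - U 0) + (1 - β (k + 1)) • A (T (U k) - U k) := by
  simp only [hT, hU, map_add, map_sub, map_smul]
  module

theorem geom_sum_smul_eq_of_anchored {K E : Type*} [Field K] [AddCommGroup E] [Module K E]
    (A : E →ₗ[K] E) {c : K} (hS : ∀ k, ∑ i ∈ range (k + 1), c ^ i ≠ 0) {β : ℕ → K}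
    (hβ : ∀ k, β k = (∑ i ∈ range (k + 1), c ^ i)⁻¹) {e : ℕ → E}
    (he : ∀ k, e (k + 1) = β (k + 1) • e 0 + (1 - β (k + 1)) • A (e k)) (k : ℕ) :
    (∑ i ∈ range (k + 1), c ^ i) • e k = ∑ i ∈ range (k + 1), c ^ i • (A ^ i) (e 0) := by
  induction k with
  | zero => simp
  | succ k ih =>
    have hS' : ∑ i ∈ range (k + 1 + 1), c ^ i = c * ∑ i ∈ range (k + 1), c ^ i + 1 := by
      rw [sum_range_succ', mul_sum]; simp [pow_succ']
    have hA : ∀ i, (A ^ (i + 1)) (e 0) = A ((A ^ i) (e 0)) := fun i => by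
      rw [pow_succ', Module.End.mul_apply]
    rw [he, hβ, smul_add, smul_smul, smul_smul, mul_inv_cancel₀ (hS _), mul_sub, mul_one,
      mul_inv_cancel₀ (hS _), hS', add_sub_cancel_right, mul_smul, ← map_smul, ih, map_sum,
      sum_range_succ' _ (k + 1), smul_sum]
    simp only [map_smul, smul_smul, ← hA, ← pow_succ', pow_zero, one_smul, Module.End.one_apply]
    exact add_comm _ _

theorem anchored_rate_eq {γ : ℝ} (hγ0 : 0 < γ) (hγ1 : γ < 1) (k : ℕ) :
    ((γ ^ 2)⁻¹ ^ k * γ ^ (k + 1) + 1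
        + ∑ i ∈ range k, ((γ ^ 2)⁻¹ ^ (i + 1) - (γ ^ 2)⁻¹ ^ i) * γ ^ (i + 1))
      / ∑ i ∈ range (k + 1), (γ ^ 2)⁻¹ ^ i
      = ((γ⁻¹ - γ) * (1 + 2 * γ - γ ^ (k + 1))) / ((γ ^ (k + 1))⁻¹ - γ ^ (k + 1)) := by
  have hterm : ∀ i : ℕ, ((γ ^ 2)⁻¹ ^ (i + 1) - (γ ^ 2)⁻¹ ^ i) * γ ^ (i + 1)
      = (γ⁻¹ - γ) * γ⁻¹ ^ i := fun i => by
    rw [inv_pow, inv_pow, inv_pow, ← pow_mul, ← pow_mul]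
    field_simp
    ring
  have h1 : γ⁻¹ ≠ 1 := (one_lt_inv₀ hγ0 |>.2 hγ1).ne'
  have h2 : (γ ^ 2)⁻¹ ≠ 1 :=
    (one_lt_inv₀ (by positivity) |>.2 (pow_lt_one₀ hγ0.le hγ1 two_ne_zero)).ne'
  rw [sum_congr rfl fun i _ => hterm i, ← mul_sum, geom_sum_eq h1, geom_sum_eq h2]
  have h3 : 1 - γ ≠ 0 := by linarith
  simp only [inv_pow, ← pow_mul]
  field_simp
  ring

theorem norm_anchored_residual_le {E : Type*} [SeminormedAddCommGroup E] [NormedSpace ℝ E]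
    (A : E →ₗ[ℝ] E) {γ : ℝ} (hγ0 : 0 < γ) (hγ1 : γ < 1) (hA : ∀ v, ‖A v‖ ≤ γ * ‖v‖)
    (r : E) (T : E → E) (hT : ∀ U, T U = A U + r) {Ustar : E} (hfix : T Ustar = Ustar)
    {β : ℕ → ℝ} (hβ : ∀ k, β k = (∑ i ∈ range (k + 1), (γ ^ (2 * i))⁻¹)⁻¹) (U : ℕ → E)
    (hU : ∀ k, U (k + 1) = β (k + 1) • U 0 + (1 - β (k + 1)) • T (U k)) (k : ℕ) :
    ‖T (U k) - U k‖
      ≤ ((γ⁻¹ - γ) * (1 + 2 * γ - γ ^ (k + 1))) / ((γ ^ (k + 1))⁻¹ - γ ^ (k + 1))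
        * ‖U 0 - Ustar‖ := by
  set c : ℝ := (γ ^ 2)⁻¹
  have hc : 1 ≤ c := one_le_inv₀ (by positivity) |>.2 (pow_le_one₀ hγ0.le hγ1.le)
  have hS : ∀ k, 0 < ∑ i ∈ range (k + 1), c ^ i := fun k =>
    sum_pos (fun i _ => by positivity) nonempty_range_add_one
  have hβc : ∀ k, β k = (∑ i ∈ range (k + 1), c ^ i)⁻¹ := fun k => by
    simp only [hβ, c, pow_mul, inv_pow]
  set d := U 0 - Ustar
  set e : ℕ → E := fun k => T (U k) - U k
  have he0 : e 0 = A d - d := by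
    have hr : A Ustar + r = Ustar := (hT Ustar).symm.trans hfix
    simp only [e, d, hT, map_sub]
    linear_combination (norm := module) hr
  have hkey := geom_sum_smul_eq_of_anchored A (fun k => (hS k).ne') hβc (e := e)
    (anchored_residual_succ A r hT hU) k
  have hsum : (∑ i ∈ range (k + 1), c ^ i) • e k
      = ∑ i ∈ range (k + 1), c ^ i • ((A ^ (i + 1)) d - (A ^ i) d) := by
    rw [hkey, he0]
    simp only [map_sub, pow_succ, Module.End.mul_apply]
  have hbound := norm_sum_range_succ_pow_smul_sub_le hc (f := fun i => (A ^ i) d)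
    (fun i => A.norm_pow_apply_le hγ0.le hA i d) k
  rw [← anchored_rate_eq hγ0 hγ1 k, div_mul_eq_mul_div, le_div_iff₀ (hS k)]
  calc ‖e k‖ * ∑ i ∈ range (k + 1), c ^ i = ‖(∑ i ∈ range (k + 1), c ^ i) • e k‖ := by
        rw [norm_smul, Real.norm_of_nonneg (hS k).le, mul_comm]
    _ ≤ _ := hsum ▸ hbound
    _ = _ := by simp only [sum_mul, add_mul, mul_assoc, pow_zero, one_mul]; rfl

theorem stmt_8_general (n : ℕ) (γ : ℝ) (hγ0 : 0 < γ) (hγ1 : γ < 1)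
    (P : Matrix (Fin n) (Fin n) ℝ)
    (hPnonneg : ∀ i j, 0 ≤ P i j)
    (hProw : ∀ i, ∑ j, P i j ≤ γ)
    (r : Fin n → ℝ)
    (T : (Fin n → ℝ) → (Fin n → ℝ))
    (hTdef : ∀ U, T U = P.mulVec U + r)
    (Ustar : Fin n → ℝ) (hfix : T Ustar = Ustar)
    (β : ℕ → ℝ) (hβ : ∀ k, β k = (∑ i ∈ Finset.range (k+1), (γ^(2*i))⁻¹)⁻¹)
    (U : ℕ → Fin n → ℝ)
    (hU : ∀ k : ℕ, U (k+1) = β (k+1) • U 0 + (1 - β (k+1)) • T (U k)) :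
    ∀ k : ℕ,
      ‖T (U k) - U k‖
        ≤ ((γ⁻¹ - γ) * (1 + 2*γ - γ^(k+1))) / ((γ^(k+1))⁻¹ - γ^(k+1))
            * ‖U 0 - Ustar‖ :=
  norm_anchored_residual_le P.mulVecLin hγ0 hγ1
    (P.norm_mulVec_le_of_nonneg_of_sum_row_le hPnonneg hProw hγ0.le) r T hTdef hfix hβ U hU

theorem stmt_8 (n : ℕ) (hn : 0 < n) (γ : ℝ) (hγ0 : 0 < γ) (hγ1 : γ < 1)
    (P : Matrix (Fin n) (Fin n) ℝ)
    (hPnonneg : ∀ i j, 0 ≤ P i j)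
    (hProw : ∀ i, ∑ j, P i j ≤ γ)
    (r : Fin n → ℝ)
    (T : (Fin n → ℝ) → (Fin n → ℝ))
    (hTdef : ∀ U, T U = P.mulVec U + r)
    (Ustar : Fin n → ℝ) (hfix : T Ustar = Ustar)
    (β : ℕ → ℝ) (hβ : ∀ k, β k = (∑ i ∈ Finset.range (k+1), (γ^(2*i))⁻¹)⁻¹)
    (U : ℕ → Fin n → ℝ)
    (hU : ∀ k : ℕ, U (k+1) = β (k+1) • U 0 + (1 - β (k+1)) • T (U k)) :
    ∀ k : ℕ,
      ‖T (U k) - U k‖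
        ≤ ((γ⁻¹ - γ) * (1 + 2*γ - γ^(k+1))) / ((γ^(k+1))⁻¹ - γ^(k+1))
            * ‖U 0 - Ustar‖ :=
  stmt_8_general n γ hγ0 hγ1 P hPnonneg hProw r T hTdef Ustar hfix β hβ U hU
end

section
/- Let P ∈ ℝ^{n×n} be a nonnegative matrix with row sums ≤ γ, 0 < γ < 1, T U = P U + r with fixed point U*. With β_k = 1/(∑_{i=0}^k γ^{-2i}) and U^k = β_k U^0 + (1-β_k) T U^{k-1}: if U^0 ≤ T U^0 componentwise, then ‖T U^k - U^k‖_∞ ≤ ((γ⁻¹ - γ)(1 + γ - γ^(k+1)))/((γ^(k+1))⁻¹ - γ^(k+1)) · ‖U^0 - U*‖_∞ for all k ≥ 0. -/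
/-!
Put `D k = T U^k - U^k`, `v = U* - U^0` and `s k = ∑_{i ≤ k} γ^{-2i} = (β k)⁻¹`. Because `T` is
affine with linear part `P`, `D (k+1) = β (k+1) D 0 + (1 - β (k+1)) P D k`, which unrolls to
`s k • D k = ∑_{j ≤ k} γ^{-2j} P^j D 0`, with `D 0 = v - P v`. The hypothesis `U^0 ≤ T U^0` is
`P v ≤ v`, which for a nonnegative `P` with row sums `< 1` forces `v ≥ 0`. Hence every `P^j D 0`
is nonnegative, so `D k ≥ 0`, and summation by parts bounds `s k • D k` from above using only
`0 ≤ P^(k+1) v` and `P^j v ≤ γ^j ‖v‖`; the resulting factor `(1 + γ - γ^(k+1)) / (γ^k s k)` is the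
stated rate.
-/

open Finset Matrix

-- The boundary term of the summation by parts is kept so that the induction closes.
lemma sum_inv_sq_pow_mul_sub_add_le {γ M : ℝ} (hγ0 : 0 < γ) (hγ1 : γ ≤ 1) {w : ℕ → ℝ}
    (hw : ∀ j, w j ≤ γ ^ j * M) (k : ℕ) :
    ∑ j ∈ range (k + 1), (γ⁻¹ ^ 2) ^ j * (w j - w (j + 1)) + (γ⁻¹ ^ 2) ^ k * w (k + 1)
      ≤ (1 + γ - γ ^ (k + 1)) / γ ^ k * M := by
  induction k with
  | zero => simpa using hw 0
  | succ k ih =>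
    have hq : (γ⁻¹ ^ 2) ^ k ≤ (γ⁻¹ ^ 2) ^ (k + 1) :=
      pow_le_pow_right₀ (one_le_pow₀ ((one_le_inv₀ hγ0).2 hγ1)) k.le_succ
    calc ∑ j ∈ range (k + 2), (γ⁻¹ ^ 2) ^ j * (w j - w (j + 1)) + (γ⁻¹ ^ 2) ^ (k + 1) * w (k + 2)
        = (∑ j ∈ range (k + 1), (γ⁻¹ ^ 2) ^ j * (w j - w (j + 1)) + (γ⁻¹ ^ 2) ^ k * w (k + 1))
          + ((γ⁻¹ ^ 2) ^ (k + 1) - (γ⁻¹ ^ 2) ^ k) * w (k + 1) := by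
          rw [sum_range_succ]; ring
      _ ≤ (1 + γ - γ ^ (k + 1)) / γ ^ k * M
          + ((γ⁻¹ ^ 2) ^ (k + 1) - (γ⁻¹ ^ 2) ^ k) * (γ ^ (k + 1) * M) :=
          add_le_add ih (mul_le_mul_of_nonneg_left (hw _) (sub_nonneg.2 hq))
      _ = (1 + γ - γ ^ (k + 2)) / γ ^ (k + 1) * M := by
          simp only [← pow_mul, inv_pow]
          field_simp
          ring

lemma div_geom_sum_inv_sq_eq {γ : ℝ} (hγ0 : 0 < γ) (hγ1 : γ < 1) (k : ℕ) :
    (1 + γ - γ ^ (k + 1)) / γ ^ k / ∑ i ∈ range (k + 1), (γ⁻¹ ^ 2) ^ i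
      = ((γ⁻¹ - γ) * (1 + γ - γ ^ (k + 1))) / ((γ ^ (k + 1))⁻¹ - γ ^ (k + 1)) := by
  have hq : γ⁻¹ ^ 2 ≠ 1 := (one_lt_pow₀ (one_lt_inv₀ hγ0 |>.2 hγ1) two_ne_zero).ne'
  rw [geom_sum_eq hq, ← pow_mul, inv_pow, inv_pow]
  field_simp
  ring

section NonnegMatrix

variable {ι : Type*} [Fintype ι] {P : Matrix ι ι ℝ} {γ : ℝ}

lemma mulVec_mono_of_nonneg (hP : ∀ i j, 0 ≤ P i j) : Monotone (P *ᵥ ·) :=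
  fun _ _ hxy i => sum_le_sum fun j _ => mul_le_mul_of_nonneg_left (hxy j) (hP i j)

lemma pow_mulVec_mono_of_nonneg [DecidableEq ι] (hP : ∀ i j, 0 ≤ P i j) (m : ℕ) :
    Monotone (P ^ m *ᵥ ·) := by
  induction m with
  | zero => simp only [pow_zero, one_mulVec]; exact fun _ _ h => h
  | succ m ih =>
    simp only [pow_succ', ← mulVec_mulVec]
    exact (mulVec_mono_of_nonneg hP).comp ih

lemma norm_mulVec_le_of_sum_le (hP : ∀ i j, 0 ≤ P i j) (hrow : ∀ i, ∑ j, P i j ≤ γ)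
    (hγ : 0 ≤ γ) (x : ι → ℝ) : ‖P *ᵥ x‖ ≤ γ * ‖x‖ := by
  refine (pi_norm_le_iff_of_nonneg (by positivity)).2 fun i => ?_
  calc ‖(P *ᵥ x) i‖ ≤ ∑ j, ‖P i j * x j‖ := norm_sum_le _ _
    _ ≤ ∑ j, P i j * ‖x‖ := sum_le_sum fun j _ => by
        rw [norm_mul, Real.norm_of_nonneg (hP i j)]
        exact mul_le_mul_of_nonneg_left (norm_le_pi_norm x j) (hP i j)
    _ = (∑ j, P i j) * ‖x‖ := (sum_mul ..).symm
    _ ≤ γ * ‖x‖ := mul_le_mul_of_nonneg_right (hrow i) (norm_nonneg x)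

lemma norm_pow_mulVec_le_of_sum_le [DecidableEq ι] (hP : ∀ i j, 0 ≤ P i j)
    (hrow : ∀ i, ∑ j, P i j ≤ γ) (hγ : 0 ≤ γ) (m : ℕ) (x : ι → ℝ) : ‖P ^ m *ᵥ x‖ ≤ γ ^ m * ‖x‖ := by
  induction m with
  | zero => simp
  | succ m ih =>
    rw [pow_succ', ← mulVec_mulVec, pow_succ', mul_assoc]
    exact (norm_mulVec_le_of_sum_le hP hrow hγ _).trans (mul_le_mul_of_nonneg_left ih hγ)

lemma nonneg_of_mulVec_le_self (hP : ∀ i j, 0 ≤ P i j) (hrow : ∀ i, ∑ j, P i j ≤ γ)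
    (hγ : γ < 1) {v : ι → ℝ} (hv : P *ᵥ v ≤ v) : 0 ≤ v := by
  intro i
  obtain ⟨i₀, -, hmin⟩ := exists_min_image univ v ⟨i, mem_univ i⟩
  by_contra! hneg
  have hi₀ : v i₀ < 0 := (hmin i (mem_univ i)).trans_lt hneg
  have : γ * v i₀ ≤ v i₀ := calc
    γ * v i₀ ≤ (∑ j, P i₀ j) * v i₀ := mul_le_mul_of_nonpos_right (hrow i₀) hi₀.le
    _ = ∑ j, P i₀ j * v i₀ := sum_mul ..
    _ ≤ (P *ᵥ v) i₀ :=
      sum_le_sum fun j _ => mul_le_mul_of_nonneg_left (hmin j (mem_univ j)) (hP i₀ j)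
    _ ≤ v i₀ := hv i₀
  nlinarith

lemma pow_mulVec_nonneg [DecidableEq ι] (hP : ∀ i j, 0 ≤ P i j) (m : ℕ) {x : ι → ℝ}
    (hx : 0 ≤ x) : 0 ≤ P ^ m *ᵥ x := by
  simpa using pow_mulVec_mono_of_nonneg hP m hx

lemma sum_inv_sq_pow_smul_pow_mulVec_sub_le [DecidableEq ι] (hP : ∀ i j, 0 ≤ P i j)
    (hrow : ∀ i, ∑ j, P i j ≤ γ) (hγ0 : 0 < γ) (hγ1 : γ ≤ 1) {v : ι → ℝ} (hv : 0 ≤ v)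
    (k : ℕ) (i : ι) :
    (∑ j ∈ range (k + 1), (γ⁻¹ ^ 2) ^ j • P ^ j *ᵥ (v - P *ᵥ v)) i
      ≤ (1 + γ - γ ^ (k + 1)) / γ ^ k * ‖v‖ := by
  have hw (j : ℕ) : (P ^ j *ᵥ v) i ≤ γ ^ j * ‖v‖ :=
    (Real.le_norm_self _).trans ((norm_le_pi_norm _ i).trans
      (norm_pow_mulVec_le_of_sum_le hP hrow hγ0.le j v))
  calc (∑ j ∈ range (k + 1), (γ⁻¹ ^ 2) ^ j • P ^ j *ᵥ (v - P *ᵥ v)) i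
      = ∑ j ∈ range (k + 1), (γ⁻¹ ^ 2) ^ j * ((P ^ j *ᵥ v) i - (P ^ (j + 1) *ᵥ v) i) := by
        simp [mulVec_sub, mulVec_mulVec, pow_succ]
    _ ≤ ∑ j ∈ range (k + 1), (γ⁻¹ ^ 2) ^ j * ((P ^ j *ᵥ v) i - (P ^ (j + 1) *ᵥ v) i)
        + (γ⁻¹ ^ 2) ^ k * (P ^ (k + 1) *ᵥ v) i :=
        le_add_of_nonneg_right (mul_nonneg (by positivity) (pow_mulVec_nonneg hP _ hv i))
    _ ≤ _ := sum_inv_sq_pow_mul_sub_add_le hγ0 hγ1 hw k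

end NonnegMatrix

section AnchoredIteration

variable {ι : Type*} [Fintype ι] {P : Matrix ι ι ℝ} {r : ι → ℝ} {T : (ι → ℝ) → ι → ℝ}

lemma residual_add_smul (hT : ∀ U, T U = P *ᵥ U + r) (β : ℝ) (U₀ V : ι → ℝ) :
    T (β • U₀ + (1 - β) • T V) - (β • U₀ + (1 - β) • T V)
      = β • (T U₀ - U₀) + (1 - β) • P *ᵥ (T V - V) := by
  simp only [hT, mulVec_add, mulVec_smul, mulVec_sub]
  module

lemma geom_sum_smul_residual [DecidableEq ι] (hT : ∀ U, T U = P *ᵥ U + r) {q : ℝ} (hq : 0 < q)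
    {β : ℕ → ℝ} (hβ : ∀ k, β k = (∑ i ∈ range (k + 1), q ^ i)⁻¹) {U : ℕ → ι → ℝ}
    (hU : ∀ k, U (k + 1) = β (k + 1) • U 0 + (1 - β (k + 1)) • T (U k)) (k : ℕ) :
    (∑ i ∈ range (k + 1), q ^ i) • (T (U k) - U k)
      = ∑ j ∈ range (k + 1), q ^ j • P ^ j *ᵥ (T (U 0) - U 0) := by
  induction k with
  | zero => simp
  | succ k ih =>
    have hs : ∑ i ∈ range (k + 2), q ^ i = q * ∑ i ∈ range (k + 1), q ^ i + 1 := by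
      rw [sum_range_succ', mul_sum]; simp [pow_succ']
    have hsβ : (∑ i ∈ range (k + 2), q ^ i) * β (k + 1) = 1 :=
      (hβ (k + 1)).symm ▸ mul_inv_cancel₀ (by positivity)
    rw [hU, residual_add_smul hT, smul_add, smul_smul, smul_smul, hsβ, mul_sub, hsβ, hs,
      mul_one, add_sub_cancel_right, mul_smul, ← mulVec_smul, ih, sum_range_succ' _ (k + 1),
      add_comm, one_smul, mulVec_sum, smul_sum]
    simp only [pow_zero, one_smul, one_mulVec, mulVec_smul, mulVec_mulVec, smul_smul, pow_succ']

end AnchoredIteration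

theorem stmt_9_general (n : ℕ) (γ : ℝ) (hγ0 : 0 < γ) (hγ1 : γ < 1)
    (P : Matrix (Fin n) (Fin n) ℝ)
    (hPnonneg : ∀ i j, 0 ≤ P i j)
    (hProw : ∀ i, ∑ j, P i j ≤ γ)
    (r : Fin n → ℝ)
    (T : (Fin n → ℝ) → (Fin n → ℝ))
    (hTdef : ∀ U, T U = P.mulVec U + r)
    (Ustar : Fin n → ℝ) (hfix : T Ustar = Ustar)
    (β : ℕ → ℝ) (hβ : ∀ k, β k = (∑ i ∈ Finset.range (k+1), (γ^(2*i))⁻¹)⁻¹)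
    (U : ℕ → Fin n → ℝ)
    (hU : ∀ k : ℕ, U (k+1) = β (k+1) • U 0 + (1 - β (k+1)) • T (U k))
    (h0 : U 0 ≤ T (U 0)) :
    ∀ k : ℕ,
      ‖T (U k) - U k‖
        ≤ ((γ⁻¹ - γ) * (1 + γ - γ^(k+1))) / ((γ^(k+1))⁻¹ - γ^(k+1))
            * ‖U 0 - Ustar‖ := by
  intro k
  have hβ' (k : ℕ) : β k = (∑ i ∈ range (k + 1), (γ⁻¹ ^ 2) ^ i)⁻¹ := by
    simp only [hβ, ← pow_mul, inv_pow]
  set v := Ustar - U 0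
  have hD₀ : T (U 0) - U 0 = v - P *ᵥ v := by
    rw [hTdef, mulVec_sub]
    linear_combination (hTdef Ustar).symm.trans hfix
  have hv : 0 ≤ v :=
    nonneg_of_mulVec_le_self hPnonneg hProw hγ1 (sub_nonneg.1 (hD₀ ▸ sub_nonneg.2 h0))
  have hs : 0 < ∑ i ∈ range (k + 1), (γ⁻¹ ^ 2) ^ i := by positivity
  have hclosed (i : Fin n) :=
    congrFun (geom_sum_smul_residual hTdef (by positivity) hβ' hU k) i
  simp only [Pi.smul_apply, smul_eq_mul] at hclosed
  have hrate : 0 ≤ (1 + γ - γ ^ (k + 1)) / γ ^ k := by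
    have := pow_le_one₀ hγ0.le hγ1.le (n := k + 1)
    exact div_nonneg (by linarith) (by positivity)
  rw [← div_geom_sum_inv_sq_eq hγ0 hγ1 k, div_mul_eq_mul_div, norm_sub_rev (U 0),
    pi_norm_le_iff_of_nonneg (by positivity)]
  intro i
  have hlow : 0 ≤ (T (U k) - U k) i := by
    refine (mul_nonneg_iff_of_pos_left hs).1 ((hclosed i).symm ▸ ?_)
    exact sum_nonneg (fun j _ => smul_nonneg (by positivity)
      (pow_mulVec_nonneg hPnonneg j (sub_nonneg.2 h0))) i
  have hup := (hclosed i).trans_le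
    (hD₀ ▸ sum_inv_sq_pow_smul_pow_mulVec_sub_le hPnonneg hProw hγ0 hγ1.le hv k i)
  rw [Real.norm_eq_abs, abs_of_nonneg hlow, le_div_iff₀ hs]
  linarith

theorem stmt_9 (n : ℕ) (hn : 0 < n) (γ : ℝ) (hγ0 : 0 < γ) (hγ1 : γ < 1)
    (P : Matrix (Fin n) (Fin n) ℝ)
    (hPnonneg : ∀ i j, 0 ≤ P i j)
    (hProw : ∀ i, ∑ j, P i j ≤ γ)
    (r : Fin n → ℝ)
    (T : (Fin n → ℝ) → (Fin n → ℝ))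
    (hTdef : ∀ U, T U = P.mulVec U + r)
    (Ustar : Fin n → ℝ) (hfix : T Ustar = Ustar)
    (β : ℕ → ℝ) (hβ : ∀ k, β k = (∑ i ∈ Finset.range (k+1), (γ^(2*i))⁻¹)⁻¹)
    (U : ℕ → Fin n → ℝ)
    (hU : ∀ k : ℕ, U (k+1) = β (k+1) • U 0 + (1 - β (k+1)) • T (U k))
    (h0 : U 0 ≤ T (U 0)) :
    ∀ k : ℕ,
      ‖T (U k) - U k‖
        ≤ ((γ⁻¹ - γ) * (1 + γ - γ^(k+1))) / ((γ^(k+1))⁻¹ - γ^(k+1))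
            * ‖U 0 - Ustar‖ :=
  stmt_9_general n γ hγ0 hγ1 P hPnonneg hProw r T hTdef Ustar hfix β hβ U hU h0
end

section
/- Fix k ≥ 0, n = k+2, and γ ∈ (0,1]. Define the linear operator T : ℝⁿ → ℝⁿ by (T U)_1 = γ U_1, (T U)_2 = 1 + γ U_1, and (T U)_j = γ U_{j-1} for 3 ≤ j ≤ n. Then U* = (0, 1, γ, γ², ..., γ^{n-2}) is a fixed point of T, and for any sequence U^0 = 0, U^1, ..., U^k in ℝⁿ satisfying the span condition U^i ∈ span{T U^0 - U^0, ..., T U^{i-1} - U^{i-1}} for 1 ≤ i ≤ k, one has ‖T U^k - U^k‖_∞ ≥ γ^k / (∑_{i=0}^k γ^i). -/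
/-!
The iterates of a span-condition method started at `0` stay in the subspace of vectors supported
on coordinates `1, …, i`, because each Bellman residual moves mass only one coordinate down the
chain. For such `U` the residual `r = T U - U` satisfies `∑_{j ≤ k} γ^(k-j) r_{j+1} = γ^k` (the
reward term survives and the rest telescopes), while the left side is at most
`(∑_{i ≤ k} γ^i) ‖r‖_∞`.
-/

open Finset

section SpanCondition

variable {R M : Type*} [Ring R] [AddCommGroup M] [Module R M]

theorem mem_of_span_condition {T : M → M} {p : ℕ → Submodule R M} (hp : Monotone p)
    (hT : ∀ l x, x ∈ p l → T x - x ∈ p (l + 1)) {U : ℕ → M} (hU0 : U 0 = 0) {k : ℕ}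
    (hspan : ∀ i, 1 ≤ i → i ≤ k →
      U i ∈ Submodule.span R {v | ∃ l < i, v = T (U l) - U l}) :
    ∀ i ≤ k, U i ∈ p i := by
  intro i
  induction i using Nat.strong_induction_on with
  | _ i ih =>
    intro hik
    rcases Nat.eq_zero_or_pos i with rfl | hi
    · simp [hU0]
    · refine Submodule.span_le.mpr ?_ (hspan i hi hik)
      rintro _ ⟨l, hl, rfl⟩
      exact hp hl (hT l _ (ih l hl (by omega)))

end SpanCondition

theorem Fin.sum_univ_succ_sub_castSucc {G : Type*} [AddCommGroup G] :
    ∀ {n : ℕ} (g : Fin (n + 1) → G), ∑ i : Fin n, (g i.succ - g i.castSucc) = g (Fin.last n) - g 0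
  | 0, g => by simp
  | n + 1, g => by
    rw [Fin.sum_univ_castSucc]
    simp only [Fin.succ_castSucc]
    rw [Fin.sum_univ_succ_sub_castSucc (fun i => g i.castSucc)]
    simp

theorem abs_sum_mul_apply_le {ι κ : Type*} [Fintype ι] [Fintype κ] (w : ι → ℝ) (f : ι → κ)
    (v : κ → ℝ) : |∑ i, w i * v (f i)| ≤ (∑ i, |w i|) * ‖v‖ := by
  rw [sum_mul]
  refine (abs_sum_le_sum_abs _ _).trans (sum_le_sum fun i _ => ?_)
  rw [abs_mul]
  exact mul_le_mul_of_nonneg_left (norm_le_pi_norm v (f i)) (abs_nonneg _)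

theorem Fin.sum_pow_sub_val_eq_sum_range (γ : ℝ) (k : ℕ) :
    ∑ j : Fin (k + 1), γ ^ (k - j.1) = ∑ i ∈ range (k + 1), γ ^ i := by
  rw [Fin.sum_univ_eq_sum_range (fun j => γ ^ (k - j)), ← sum_range_reflect (fun i => γ ^ i)]
  simp

/-- Coordinates are indexed from `0`, so the rewarded state `s₂` is coordinate `1`. -/
def chainBellman (k : ℕ) (γ : ℝ) (U : Fin (k + 2) → ℝ) : Fin (k + 2) → ℝ := fun j =>
  if j.1 = 0 then γ * U 0
  else if j.1 = 1 then 1 + γ * U 0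
  else γ * U ⟨j.1 - 1, lt_of_le_of_lt (Nat.sub_le _ _) j.isLt⟩

def supportedIcc (k i : ℕ) : Submodule ℝ (Fin (k + 2) → ℝ) :=
  Submodule.pi {j | j.1 = 0 ∨ i < j.1} fun _ => ⊥

theorem mem_supportedIcc {k i : ℕ} {x : Fin (k + 2) → ℝ} :
    x ∈ supportedIcc k i ↔ ∀ j : Fin (k + 2), (j.1 = 0 ∨ i < j.1) → x j = 0 := by
  simp [supportedIcc, Submodule.mem_pi]

theorem supportedIcc_mono (k : ℕ) : Monotone (supportedIcc k) := fun _ _ hii' _ hx =>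
  mem_supportedIcc.2 fun j hj => mem_supportedIcc.1 hx j (hj.imp_right hii'.trans_lt)

namespace chainBellman

variable {k : ℕ} {γ : ℝ}

@[simp] theorem apply_zero (U : Fin (k + 2) → ℝ) : chainBellman k γ U 0 = γ * U 0 := by
  simp [chainBellman]

theorem apply_succ (U : Fin (k + 2) → ℝ) (j : Fin (k + 1)) :
    chainBellman k γ U j.succ = (if j = 0 then 1 else 0) + γ * U j.castSucc := by
  rcases j with ⟨_ | j, hj⟩
  · simp [chainBellman]
  · simp [chainBellman, Fin.ext_iff]

theorem isFixedPt_geometric :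
    Function.IsFixedPt (chainBellman k γ) fun j => if j.1 = 0 then 0 else γ ^ (j.1 - 1) := by
  funext j
  refine Fin.cases (by simp) (fun j => ?_) j
  rw [apply_succ]
  rcases j with ⟨_ | j, hj⟩ <;> simp [Fin.ext_iff, pow_succ']

theorem sub_self_mem_supportedIcc {l : ℕ} {x : Fin (k + 2) → ℝ} (hx : x ∈ supportedIcc k l) :
    chainBellman k γ x - x ∈ supportedIcc k (l + 1) := by
  rw [mem_supportedIcc] at hx ⊢
  intro j hj
  induction j using Fin.cases with
  | zero => simp [hx 0 (Or.inl rfl)]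
  | succ j =>
    have hj : l < j.1 := by simpa using hj
    rw [Pi.sub_apply, apply_succ, hx _ (Or.inr hj), hx _ (Or.inr (by simp; omega))]
    simp [Fin.ext_iff, show j.1 ≠ 0 by omega]

theorem weighted_sum_sub_self (U : Fin (k + 2) → ℝ) :
    ∑ j : Fin (k + 1), γ ^ (k - j.1) * (chainBellman k γ U - U) j.succ =
      γ ^ k + γ ^ (k + 1) * U 0 - U (Fin.last (k + 1)) := by
  set g : Fin (k + 2) → ℝ := fun i => γ ^ (k + 1 - i.1) * U i
  have hterm : ∀ j : Fin (k + 1), γ ^ (k - j.1) * (chainBellman k γ U - U) j.succ =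
      (if j = 0 then γ ^ k else 0) - (g j.succ - g j.castSucc) := by
    intro j
    have hcast : g j.castSucc = γ ^ (k - j.1) * γ * U j.castSucc := by
      simp only [g, Fin.val_castSucc, ← pow_succ, Nat.sub_add_comm (Nat.lt_succ_iff.1 j.2)]
    have hsucc : g j.succ = γ ^ (k - j.1) * U j.succ := by
      simp only [g, Fin.val_succ, Nat.add_sub_add_right]
    have hfirst : γ ^ (k - j.1) * (if j = 0 then 1 else 0) = if j = 0 then γ ^ k else 0 := by
      split_ifs with h0 <;> simp [h0]
    rw [Pi.sub_apply, apply_succ, hcast, hsucc, ← hfirst]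
    ring
  rw [sum_congr rfl fun j _ => hterm j, sum_sub_distrib, Fintype.sum_ite_eq',
    Fin.sum_univ_succ_sub_castSucc]
  simp only [g, Fin.val_last, Fin.val_zero, tsub_self, tsub_zero, pow_zero, one_mul]
  ring

end chainBellman

theorem stmt_12_general (k : ℕ) (γ : ℝ) (hγ0 : 0 < γ)
    (T : (Fin (k+2) → ℝ) → (Fin (k+2) → ℝ))
    (hT : ∀ (U : Fin (k+2) → ℝ) (j : Fin (k+2)),
      T U j = if j.1 = 0 then γ * U 0
              else if j.1 = 1 then 1 + γ * U 0
              else γ * U ⟨j.1 - 1, lt_of_le_of_lt (Nat.sub_le _ _) j.isLt⟩)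
    (Ustar : Fin (k+2) → ℝ)
    (hUstar : ∀ j : Fin (k+2), Ustar j = if j.1 = 0 then 0 else γ^(j.1 - 1)) :
    T Ustar = Ustar ∧
    ∀ U : ℕ → (Fin (k+2) → ℝ), U 0 = 0 →
      (∀ i : ℕ, 1 ≤ i → i ≤ k →
        U i ∈ Submodule.span ℝ {v : Fin (k+2) → ℝ | ∃ l < i, v = T (U l) - U l}) →
      γ^k / (∑ i ∈ Finset.range (k+1), γ^i) ≤ ‖T (U k) - U k‖ := by
  obtain rfl : T = chainBellman k γ := funext fun U => funext (hT U)
  obtain rfl : Ustar = fun j => if j.1 = 0 then 0 else γ ^ (j.1 - 1) := funext hUstar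
  refine ⟨chainBellman.isFixedPt_geometric, fun U hU0 hspan => ?_⟩
  have hUk := mem_supportedIcc.1 <| mem_of_span_condition (supportedIcc_mono k)
    (fun _ _ => chainBellman.sub_self_mem_supportedIcc) hU0 hspan k le_rfl
  have hweights : ∀ j : Fin (k + 1), |γ ^ (k - j.1)| = γ ^ (k - j.1) :=
    fun _ => abs_of_pos (pow_pos hγ0 _)
  rw [div_le_iff₀' (sum_pos (fun i _ => pow_pos hγ0 i) ⟨0, by simp⟩)]
  calc γ ^ k = ∑ j : Fin (k + 1), γ ^ (k - j.1) * (chainBellman k γ (U k) - U k) j.succ := by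
        rw [chainBellman.weighted_sum_sub_self, hUk 0 (Or.inl rfl), hUk _ (Or.inr (by simp))]
        ring
    _ ≤ (∑ j : Fin (k + 1), |γ ^ (k - j.1)|) * ‖chainBellman k γ (U k) - U k‖ :=
        (le_abs_self _).trans (abs_sum_mul_apply_le _ _ _)
    _ = (∑ i ∈ range (k + 1), γ ^ i) * ‖chainBellman k γ (U k) - U k‖ := by
        simp only [hweights, Fin.sum_pow_sub_val_eq_sum_range]

theorem stmt_12 (k : ℕ) (γ : ℝ) (hγ0 : 0 < γ) (hγ1 : γ ≤ 1)
    (T : (Fin (k+2) → ℝ) → (Fin (k+2) → ℝ))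
    (hT : ∀ (U : Fin (k+2) → ℝ) (j : Fin (k+2)),
      T U j = if j.1 = 0 then γ * U 0
              else if j.1 = 1 then 1 + γ * U 0
              else γ * U ⟨j.1 - 1, lt_of_le_of_lt (Nat.sub_le _ _) j.isLt⟩)
    (Ustar : Fin (k+2) → ℝ)
    (hUstar : ∀ j : Fin (k+2), Ustar j = if j.1 = 0 then 0 else γ^(j.1 - 1)) :
    T Ustar = Ustar ∧
    ∀ U : ℕ → (Fin (k+2) → ℝ), U 0 = 0 →
      (∀ i : ℕ, 1 ≤ i → i ≤ k →
        U i ∈ Submodule.span ℝ {v : Fin (k+2) → ℝ | ∃ l < i, v = T (U l) - U l}) →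
      γ^k / (∑ i ∈ Finset.range (k+1), γ^i) ≤ ‖T (U k) - U k‖ :=
  stmt_12_general k γ hγ0 T hT Ustar hUstar
end

section
/- In the worst-case MDP of the lower bound (T : ℝ^{k+2} → ℝ^{k+2} given by (TU)_1 = γU_1, (TU)_2 = 1 + γU_1, (TU)_j = γU_{j-1} for j ≥ 3), any sequence starting at U^0 = 0 satisfying the span condition U^i ∈ span{T U^0 − U^0, ..., T U^{i-1} − U^{i-1}} has (U^i)_1 = 0 for all 0 ≤ i ≤ k, and (U^i)_j = 0 for all 0 ≤ i ≤ k and i+2 ≤ j ≤ k+2. -/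
theorem stmt_13 (k : ℕ) (γ : ℝ) (hγ0 : 0 < γ) (hγ1 : γ ≤ 1)
    (T : (Fin (k+2) → ℝ) → (Fin (k+2) → ℝ))
    (hT : ∀ (U : Fin (k+2) → ℝ) (j : Fin (k+2)),
      T U j = if j.1 = 0 then γ * U 0
              else if j.1 = 1 then 1 + γ * U 0
              else γ * U ⟨j.1 - 1, lt_of_le_of_lt (Nat.sub_le _ _) j.isLt⟩)
    (U : ℕ → (Fin (k+2) → ℝ)) (h0 : U 0 = 0)
    (hspan : ∀ i : ℕ, 1 ≤ i → i ≤ k →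
      U i ∈ Submodule.span ℝ {v : Fin (k+2) → ℝ | ∃ l < i, v = T (U l) - U l}) :
    (∀ i : ℕ, i ≤ k → U i 0 = 0) ∧
    (∀ i : ℕ, i ≤ k → ∀ j : Fin (k+2), i + 1 ≤ j.1 → U i j = 0) := by
  have main : ∀ i, i ≤ k →
      U i 0 = 0 ∧ ∀ j : Fin (k+2), i + 1 ≤ j.1 → U i j = 0 := by
    intro i
    induction i using Nat.strong_induction_on with
    | _ i IH =>
      intro hik
      rcases Nat.eq_zero_or_pos i with h | h
      · subst h; simp [h0]
      · have hspan' := hspan i h hik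
        let S : Submodule ℝ (Fin (k+2) → ℝ) :=
          { carrier := {v | v 0 = 0 ∧ ∀ j : Fin (k+2), i + 1 ≤ j.1 → v j = 0}
            add_mem' := by
              rintro a b ⟨ha0, ha⟩ ⟨hb0, hb⟩
              exact ⟨by simp [ha0, hb0], fun j hj => by simp [ha j hj, hb j hj]⟩
            zero_mem' := ⟨rfl, fun j hj => rfl⟩
            smul_mem' := by
              rintro c a ⟨ha0, ha⟩
              exact ⟨by simp [ha0], fun j hj => by simp [ha j hj]⟩ }
        have hle : Submodule.span ℝ {v : Fin (k+2) → ℝ | ∃ l < i, v = T (U l) - U l} ≤ S := by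
          rw [Submodule.span_le]
          rintro v ⟨l, hl, rfl⟩
          obtain ⟨hl0, hlj⟩ := IH l hl (le_trans hl.le hik)
          constructor
          · have h00 : ((0 : Fin (k+2)) : Fin (k+2)).1 = 0 := rfl
            simp [Pi.sub_apply, hT, h00, hl0]
          · intro j hj
            have hj2 : 2 ≤ j.1 := by omega
            have hne0 : j.1 ≠ 0 := by omega
            have hne1 : j.1 ≠ 1 := by omega
            have e1 : U l ⟨j.1 - 1, lt_of_le_of_lt (Nat.sub_le _ _) j.isLt⟩ = 0 :=
              hlj _ (by simp; omega)
            have e2 : U l j = 0 := hlj j (by omega)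
            simp [Pi.sub_apply, hT, hne0, hne1, e1, e2]
        exact hle hspan'
  exact ⟨fun i h => (main i h).1, fun i h => (main i h).2⟩
end

section
/- Let P₁, ..., Pₙ ∈ ℝ^{n×n} be nonnegative matrices such that for each i, the i-th row of Pᵢ has row sum at most γ, and for every l ≠ i the l-th row of Pᵢ equals the l-th standard basis vector e_lᵀ. Then the product P_GS = Pₙ ⋯ P₂ P₁ is a nonnegative matrix with all row sums at most γ; in particular ‖P_GS‖_∞ ≤ γ. -/
/-!
Track the row sums of the partial products `Qₖ = Pₖ ⋯ P₁`. Left multiplication by `Pᵢ` leaves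
every row other than the `i`-th unchanged and replaces row `i` by a nonnegative combination of
rows with total weight at most `γ`. Hence, as long as `γ ≤ 1`, all row sums of `Qₖ` stay at most
`1`, and the rows already updated have sum at most `γ`; after all `n` updates every row has.
-/

open Matrix

namespace Matrix

variable {ι : Type*} [Fintype ι]

theorem row_sum_mul (A B : Matrix ι ι ℝ) (l : ι) :
    ∑ m, (A * B) l m = ∑ j, A l j * ∑ m, B j m := by
  simp only [mul_apply, Finset.mul_sum]
  exact Finset.sum_comm

theorem norm_mulVec_le_of_row_sum_le {A : Matrix ι ι ℝ} {c : ℝ} (hA : ∀ l m, 0 ≤ A l m)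
    (hrow : ∀ l, ∑ m, A l m ≤ c) (v : ι → ℝ) : ‖A *ᵥ v‖ ≤ c * ‖v‖ := by
  cases isEmpty_or_nonempty ι
  · simp [Subsingleton.elim v 0]
  rw [pi_norm_le_iff_of_nonempty]
  intro l
  calc ‖∑ j, A l j * v j‖
      ≤ ∑ j, ‖A l j * v j‖ := norm_sum_le _ _
    _ ≤ ∑ j, A l j * ‖v‖ := by
        gcongr with j
        rw [norm_mul, Real.norm_of_nonneg (hA l j)]
        exact mul_le_mul_of_nonneg_left (norm_le_pi_norm v j) (hA l j)
    _ = (∑ j, A l j) * ‖v‖ := (Finset.sum_mul ..).symm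
    _ ≤ c * ‖v‖ := mul_le_mul_of_nonneg_right (hrow l) (norm_nonneg v)

variable [DecidableEq ι]

structure IsCoordUpdate (γ : ℝ) (i : ι) (A : Matrix ι ι ℝ) : Prop where
  nonneg : ∀ l m, 0 ≤ A l m
  row_sum_le : ∑ m, A i m ≤ γ
  row_eq_of_ne : ∀ l, l ≠ i → ∀ m, A l m = if l = m then 1 else 0

namespace IsCoordUpdate

variable {γ : ℝ} {i : ι} {A B : Matrix ι ι ℝ}

theorem row_sum_mul_of_ne (hA : IsCoordUpdate γ i A) {l : ι} (hl : l ≠ i) :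
    ∑ m, (A * B) l m = ∑ m, B l m := by
  simp [row_sum_mul, hA.row_eq_of_ne l hl]

theorem row_sum_mul_le (hA : IsCoordUpdate γ i A)
    (hB1 : ∀ l, ∑ m, B l m ≤ 1) : ∑ m, (A * B) i m ≤ γ :=
  calc ∑ m, (A * B) i m = ∑ j, A i j * ∑ m, B j m := row_sum_mul A B i
    _ ≤ ∑ j, A i j * 1 := by
        gcongr with j
        · exact hA.nonneg i j
        · exact hB1 j
    _ ≤ γ := by simpa using hA.row_sum_le

end IsCoordUpdate

theorem row_sum_list_prod_le_of_isCoordUpdate {γ : ℝ} (hγ : γ ≤ 1) (L : List (ι × Matrix ι ι ℝ))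
    (hL : ∀ p ∈ L, IsCoordUpdate γ p.1 p.2) :
    (∀ l m, 0 ≤ (L.map Prod.snd).prod l m) ∧ (∀ l, ∑ m, (L.map Prod.snd).prod l m ≤ 1) ∧
      ∀ p ∈ L, ∑ m, (L.map Prod.snd).prod p.1 m ≤ γ := by
  induction L with
  | nil => refine ⟨fun l m => ?_, fun l => ?_, by simp⟩ <;> simp [one_apply]; split <;> simp
  | cons p L ih =>
    obtain ⟨hQ0, hQ1, hQγ⟩ := ih fun q hq => hL q (List.mem_cons_of_mem p hq)
    have hp := hL p List.mem_cons_self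
    have hrow_p := hp.row_sum_mul_le hQ1
    simp only [List.map_cons, List.prod_cons, List.forall_mem_cons]
    refine ⟨fun l m => ?_, fun l => ?_, hrow_p, fun q hq => ?_⟩
    · rw [mul_apply]
      exact Finset.sum_nonneg fun j _ => mul_nonneg (hp.nonneg l j) (hQ0 j m)
    · by_cases hl : l = p.1
      · exact hl ▸ hrow_p.trans hγ
      · exact (hp.row_sum_mul_of_ne hl).trans_le (hQ1 l)
    · by_cases hq1 : q.1 = p.1
      · exact hq1 ▸ hrow_p
      · exact (hp.row_sum_mul_of_ne hq1).trans_le (hQγ q hq)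

end Matrix

theorem stmt_18_general (n : ℕ) (γ : ℝ) (hγ1 : γ < 1)
    (P : Fin n → Matrix (Fin n) (Fin n) ℝ)
    (hnonneg : ∀ i l m, 0 ≤ P i l m)
    (hrow : ∀ i : Fin n, ∑ m, P i i m ≤ γ)
    (hid : ∀ i l : Fin n, l ≠ i → ∀ m, P i l m = if l = m then 1 else 0)
    (PGS : Matrix (Fin n) (Fin n) ℝ)
    (hPGS : PGS = (List.ofFn P).reverse.prod) :
    (∀ l m, 0 ≤ PGS l m) ∧
    (∀ l, ∑ m, PGS l m ≤ γ) ∧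
    (∀ v : Fin n → ℝ, ‖PGS.mulVec v‖ ≤ γ * ‖v‖) := by
  set L := (List.ofFn fun i => (i, P i)).reverse
  have hLP : L.map Prod.snd = (List.ofFn P).reverse := by
    simp [L, List.map_reverse, List.map_ofFn, Function.comp_def]
  have hL : ∀ p ∈ L, IsCoordUpdate γ p.1 p.2 := by
    simp only [L, List.mem_reverse, List.mem_ofFn, forall_exists_index]
    rintro _ i rfl
    exact ⟨hnonneg i, hrow i, hid i⟩
  obtain ⟨hPGS0, -, hPGSγ⟩ := row_sum_list_prod_le_of_isCoordUpdate hγ1.le L hL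
  rw [hLP, ← hPGS] at hPGS0 hPGSγ
  have hrowPGS : ∀ l, ∑ m, PGS l m ≤ γ := fun i =>
    hPGSγ (i, P i) (by simp [L, List.mem_reverse, List.mem_ofFn])
  exact ⟨hPGS0, hrowPGS, norm_mulVec_le_of_row_sum_le hPGS0 hrowPGS⟩

theorem stmt_18 (n : ℕ) (hn : 0 < n) (γ : ℝ) (hγ0 : 0 < γ) (hγ1 : γ < 1)
    (P : Fin n → Matrix (Fin n) (Fin n) ℝ)
    (hnonneg : ∀ i l m, 0 ≤ P i l m)
    (hrow : ∀ i : Fin n, ∑ m, P i i m ≤ γ)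
    (hid : ∀ i l : Fin n, l ≠ i → ∀ m, P i l m = if l = m then 1 else 0)
    (PGS : Matrix (Fin n) (Fin n) ℝ)
    (hPGS : PGS = (List.ofFn P).reverse.prod) :
    (∀ l m, 0 ≤ PGS l m) ∧
    (∀ l, ∑ m, PGS l m ≤ γ) ∧
    (∀ v : Fin n → ℝ, ‖PGS.mulVec v‖ ≤ γ * ‖v‖) :=
  stmt_18_general n γ hγ1 P hnonneg hrow hid PGS hPGS
end

section
/- Let T_GS : ℝⁿ → ℝⁿ be a sup-norm γ-contraction (0 < γ < 1) that is order-monotone, with fixed point U*. Define β_k = 1/(∑_{i=0}^k γ^{-2i}) and U^k = β_k U^0 + (1−β_k) T_GS U^{k−1}. If U^0 ≤ T_GS U^0 componentwise, then for all k, U^0 ≤ U* and ‖T_GS U^k − U^k‖_∞ ≤ ((γ⁻¹ − γ)(1 + γ − γ^(k+1)))/((γ^(k+1))⁻¹ − γ^(k+1)) · ‖U^0 − U*‖_∞, provided additionally that for all α ∈ [0,1] and U, Ṽ there exists a nonnegative matrix P with row sums ≤ γ such that T_GS U − (1−α) T_GS Ṽ − α T_GS U* ≤ P (U − (1−α) Ṽ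 − α U*). -/
/-!
Since `U⁰ ≤ T U⁰`, `T` is monotone and the anchor weights `β_k` decrease, the iterates increase
and satisfy `Uᵏ ≤ T Uᵏ`; this is the lower half of the norm bound. For the upper half write
`C = ‖U⁰ - U*‖`, `ρ_k` for the rate and `𝟙` for the constant vector. The invariant is
`T Uᵏ - Uᵏ ≤ (ρ_k - β_k) C 𝟙 + β_k (U* - U⁰)`. The linearization at `α = β_{k+1}` bounds
`T U^{k+1} - U^{k+1}` by `P ((1 - β_{k+1})(T Uᵏ - Uᵏ) - β_{k+1}(U* - U⁰)) + β_{k+1}(U* - U⁰)`.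
Because `β_{k+1} ≤ (1 - β_{k+1}) β_k`, the anchor part of the invariant absorbs the negative term,
and the row sums of `P` contribute a factor `γ`. What remains is the scalar recursion
`ρ_{k+1} = γ (1 - β_{k+1}) ρ_k + (1 - γ) β_{k+1}`, which the closed form of the rate satisfies.
Finally, `U⁰ ≤ U*` because `w = U⁰ - U*` satisfies `w ≤ P w` with row sums of `P` at most `γ < 1`,
which forces `‖w⁺‖ ≤ γ ‖w⁺‖`.
-/

open Finset Matrix

noncomputable def anchorWeight (γ : ℝ) (k : ℕ) : ℝ := (∑ i ∈ range (k + 1), (γ ^ (2 * i))⁻¹)⁻¹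

noncomputable def anchorRate (γ : ℝ) (k : ℕ) : ℝ :=
  ((γ⁻¹ - γ) * (1 + γ - γ ^ (k + 1))) / ((γ ^ (k + 1))⁻¹ - γ ^ (k + 1))

section AnchorCoefficients

variable (γ : ℝ)

theorem one_le_sum_inv_pow_two_mul (k : ℕ) : 1 ≤ ∑ i ∈ range (k + 1), (γ ^ (2 * i))⁻¹ := by
  rw [sum_range_succ']
  simp only [mul_zero, pow_zero, inv_one, le_add_iff_nonneg_left]
  exact sum_nonneg fun i _ => by rw [pow_mul]; positivity

theorem anchorWeight_zero : anchorWeight γ 0 = 1 := by simp [anchorWeight]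

theorem anchorWeight_pos (k : ℕ) : 0 < anchorWeight γ k :=
  inv_pos.mpr (zero_lt_one.trans_le (one_le_sum_inv_pow_two_mul γ k))

theorem anchorWeight_le_one (k : ℕ) : anchorWeight γ k ≤ 1 :=
  inv_le_one_of_one_le₀ (one_le_sum_inv_pow_two_mul γ k)

theorem anchorWeight_antitone : Antitone (anchorWeight γ) := by
  refine antitone_nat_of_succ_le fun k => inv_anti₀ (zero_lt_one.trans_le
    (one_le_sum_inv_pow_two_mul γ k)) ?_
  rw [sum_range_succ _ (k + 1), le_add_iff_nonneg_right, pow_mul]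
  positivity

variable {γ}

theorem anchorWeight_succ_le_mul (hγ0 : 0 < γ) (hγ1 : γ ≤ 1) (k : ℕ) :
    anchorWeight γ (k + 1) ≤ (1 - anchorWeight γ (k + 1)) * anchorWeight γ k := by
  have hS := one_le_sum_inv_pow_two_mul γ k
  have ht : 1 ≤ (γ ^ (2 * (k + 1)))⁻¹ := one_le_inv₀ (by positivity) |>.mpr (pow_le_one₀ hγ0.le hγ1)
  simp only [anchorWeight]
  rw [sum_range_succ _ (k + 1)]
  generalize ∑ i ∈ range (k + 1), (γ ^ (2 * i))⁻¹ = S at *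
  generalize (γ ^ (2 * (k + 1)))⁻¹ = t at *
  rw [inv_le_iff_one_le_mul₀ (by linarith)]
  field_simp
  linarith

theorem anchorWeight_eq_div (hγ0 : 0 < γ) (hγ1 : γ < 1) (k : ℕ) :
    anchorWeight γ k = (γ⁻¹ ^ 2 - 1) / ((γ⁻¹ ^ 2) ^ (k + 1) - 1) := by
  have hq : γ⁻¹ ^ 2 ≠ 1 := (one_lt_pow₀ ((one_lt_inv₀ hγ0).mpr hγ1) two_ne_zero).ne'
  simp only [anchorWeight, pow_mul, ← inv_pow]
  rw [geom_sum_eq hq, inv_div]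

theorem anchorRate_zero (hγ0 : 0 < γ) (hγ1 : γ < 1) : anchorRate γ 0 = 1 := by
  have hne : γ⁻¹ - γ ≠ 0 := by
    have := (one_lt_inv₀ hγ0).mpr hγ1
    linarith
  simp [anchorRate, hne]

theorem anchorRate_succ (hγ0 : 0 < γ) (hγ1 : γ < 1) (k : ℕ) :
    anchorRate γ (k + 1) = γ * (1 - anchorWeight γ (k + 1)) * anchorRate γ k
      + (1 - γ) * anchorWeight γ (k + 1) := by
  rw [anchorWeight_eq_div hγ0 hγ1, anchorRate, anchorRate]
  have hx : 0 < γ ^ (k + 1) := pow_pos hγ0 _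
  have hx1 : γ ^ (k + 1) < 1 := pow_lt_one₀ hγ0.le hγ1 (by omega)
  have e1 : γ ^ (k + 1 + 1) = γ ^ (k + 1) * γ := pow_succ _ _
  have e2 : (γ⁻¹ ^ 2) ^ (k + 1 + 1) = ((γ ^ (k + 1) * γ) ^ 2)⁻¹ := by
    rw [← e1, ← pow_mul, ← pow_mul, inv_pow, mul_comm]
  rw [e1, e2]
  generalize γ ^ (k + 1) = x at *
  have h1 : x * γ < 1 := by nlinarith
  have h2 : 0 < x * γ := by positivity
  have d1 : 1 - x ^ 2 ≠ 0 := by nlinarith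
  have d2 : 1 - γ ^ 2 * x ^ 2 ≠ 0 := by nlinarith
  have d3 : 1 - γ ^ 2 ≠ 0 := by nlinarith
  field_simp
  ring

theorem anchorWeight_le_anchorRate (hγ0 : 0 < γ) (hγ1 : γ < 1) (k : ℕ) :
    anchorWeight γ k ≤ anchorRate γ k := by
  induction k with
  | zero => rw [anchorWeight_zero, anchorRate_zero hγ0 hγ1]
  | succ k ih =>
    have hc := anchorWeight_succ_le_mul hγ0 hγ1.le k
    have h1 := anchorWeight_le_one γ (k + 1)
    rw [anchorRate_succ hγ0 hγ1]
    nlinarith [mul_nonneg (mul_nonneg hγ0.le (sub_nonneg.mpr h1)) (sub_nonneg.mpr ih)]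

end AnchorCoefficients

namespace Pi

variable {ι : Type*} [Fintype ι] {c : ℝ}

theorem le_norm_smul_one (x : ι → ℝ) : x ≤ ‖x‖ • 1 := fun i => by
  simpa using (Real.le_norm_self (x i)).trans (norm_le_pi_norm x i)

theorem norm_le_of_nonneg_of_le_smul_one {x : ι → ℝ} (hc : 0 ≤ c) (h0 : 0 ≤ x) (h : x ≤ c • 1) :
    ‖x‖ ≤ c :=
  (pi_norm_le_iff_of_nonneg hc).mpr fun i => by
    simpa [abs_of_nonneg (h0 i)] using h i

end Pi

namespace Matrix

variable {ι : Type*} [Fintype ι] {P : Matrix ι ι ℝ} {γ c : ℝ} {v w : ι → ℝ}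

theorem mulVec_mono_of_nonneg (hP : ∀ i j, 0 ≤ P i j) (h : v ≤ w) : P *ᵥ v ≤ P *ᵥ w := fun i =>
  sum_le_sum fun j _ => mul_le_mul_of_nonneg_left (h j) (hP i j)

theorem mulVec_le_smul_one (hP : ∀ i j, 0 ≤ P i j) (hPγ : ∀ i, ∑ j, P i j ≤ γ) (hc : 0 ≤ c)
    (hv : v ≤ c • 1) : P *ᵥ v ≤ (γ * c) • 1 := by
  refine (mulVec_mono_of_nonneg hP hv).trans fun i => ?_
  simpa [mulVec, dotProduct, ← sum_mul] using mul_le_mul_of_nonneg_right (hPγ i) hc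

theorem nonpos_of_le_mulVec (hP : ∀ i j, 0 ≤ P i j) (hPγ : ∀ i, ∑ j, P i j ≤ γ) (hγ0 : 0 ≤ γ)
    (hγ1 : γ < 1) (h : v ≤ P *ᵥ v) : v ≤ 0 := by
  have hv : v ≤ (γ * ‖v⁺‖) • 1 := h.trans <| (mulVec_mono_of_nonneg hP (le_posPart v)).trans <|
    mulVec_le_smul_one hP hPγ (norm_nonneg _) (Pi.le_norm_smul_one _)
  have hc : 0 ≤ γ * ‖v⁺‖ := by positivity
  have hle : ‖v⁺‖ ≤ γ * ‖v⁺‖ := Pi.norm_le_of_nonneg_of_le_smul_one hc (posPart_nonneg v)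
    (sup_le hv (smul_nonneg hc zero_le_one))
  have hzero : ‖v⁺‖ = 0 := le_antisymm (by nlinarith [norm_nonneg v⁺]) (norm_nonneg _)
  exact posPart_eq_zero.mp (norm_eq_zero.mp hzero)

end Matrix

section AnchoredIteration

variable {E : Type*} [AddCommGroup E] [PartialOrder E] [IsOrderedAddMonoid E] [Module ℝ E]
  [PosSMulMono ℝ E] {T : E → E} {β : ℕ → ℝ} {U : ℕ → E}

theorem monotone_anchoredIterate (hT : Monotone T) (hβ1 : ∀ k, β k ≤ 1) (hβ : Antitone β)
    (hU : ∀ k, U (k + 1) = β (k + 1) • U 0 + (1 - β (k + 1)) • T (U k))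
    (h0 : U 0 ≤ T (U 0)) : Monotone U := by
  suffices h : ∀ k, U 0 ≤ U k ∧ U k ≤ U (k + 1) from monotone_nat_of_le_succ fun k => (h k).2
  intro k
  induction k with
  | zero =>
    refine ⟨le_rfl, sub_nonneg.mp ?_⟩
    have hdiff : U 1 - U 0 = (1 - β 1) • (T (U 0) - U 0) := by rw [hU 0]; module
    rw [hdiff]
    exact smul_nonneg (sub_nonneg.mpr (hβ1 1)) (sub_nonneg.mpr h0)
  | succ k ih =>
    obtain ⟨hU0k, hmono⟩ := ih
    have hdiff : U (k + 2) - U (k + 1)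
        = (β (k + 1) - β (k + 2)) • (T (U k) - U 0)
          + (1 - β (k + 2)) • (T (U (k + 1)) - T (U k)) := by
      rw [hU (k + 1), hU k]; module
    refine ⟨hU0k.trans hmono, sub_nonneg.mp ?_⟩
    rw [hdiff]
    exact add_nonneg
      (smul_nonneg (sub_nonneg.mpr (hβ (Nat.le_succ _))) (sub_nonneg.mpr (h0.trans (hT hU0k))))
      (smul_nonneg (sub_nonneg.mpr (hβ1 _)) (sub_nonneg.mpr (hT hmono)))

theorem anchoredIterate_le_apply (hT : Monotone T) (hβ0 : ∀ k, 0 ≤ β k) (hβ1 : ∀ k, β k ≤ 1)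
    (hβ : Antitone β) (hU : ∀ k, U (k + 1) = β (k + 1) • U 0 + (1 - β (k + 1)) • T (U k))
    (h0 : U 0 ≤ T (U 0)) (k : ℕ) : U k ≤ T (U k) := by
  have hUmono := monotone_anchoredIterate hT hβ1 hβ hU h0
  cases k with
  | zero => exact h0
  | succ k =>
    have hU0 : U 0 ≤ T (U k) := h0.trans (hT (hUmono (Nat.zero_le k)))
    have hdiff : T (U k) - U (k + 1) = β (k + 1) • (T (U k) - U 0) := by rw [hU k]; module
    calc U (k + 1) ≤ T (U k) := sub_nonneg.mp (hdiff ▸ smul_nonneg (hβ0 _) (sub_nonneg.mpr hU0))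
      _ ≤ T (U (k + 1)) := hT (hUmono (Nat.le_succ k))

end AnchoredIteration

theorem anchoredIterate_residual_le {ι : Type*} [Fintype ι] {γ : ℝ} (hγ0 : 0 < γ) (hγ1 : γ < 1)
    {T : (ι → ℝ) → ι → ℝ} (hT : Monotone T) {u : ι → ℝ} (hfix : T u = u) {U : ℕ → ι → ℝ}
    (hU : ∀ k, U (k + 1) = anchorWeight γ (k + 1) • U 0 + (1 - anchorWeight γ (k + 1)) • T (U k))
    (hU0 : U 0 ≤ u)
    (hlin : ∀ k, ∃ P : Matrix ι ι ℝ, (∀ i j, 0 ≤ P i j) ∧ (∀ i, ∑ j, P i j ≤ γ) ∧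
      T (U (k + 1)) - (1 - anchorWeight γ (k + 1)) • T (U k) - anchorWeight γ (k + 1) • T u ≤
        P *ᵥ (U (k + 1) - (1 - anchorWeight γ (k + 1)) • U k - anchorWeight γ (k + 1) • u))
    (k : ℕ) :
    T (U k) - U k ≤
      ((anchorRate γ k - anchorWeight γ k) * ‖U 0 - u‖) • 1 + anchorWeight γ k • (u - U 0) := by
  set C := ‖U 0 - u‖
  have hw : u - U 0 ≤ C • 1 := by simpa only [C, norm_sub_rev] using Pi.le_norm_smul_one (u - U 0)
  induction k with
  | zero =>
    have hTU0 : T (U 0) ≤ u := hfix ▸ hT hU0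
    simpa [anchorWeight_zero, anchorRate_zero hγ0 hγ1] using sub_le_sub_right hTU0 (U 0)
  | succ k ih =>
    set β := anchorWeight γ (k + 1)
    set M := anchorRate γ k - anchorWeight γ k
    set c := (1 - β) * anchorWeight γ k - β
    obtain ⟨P, hP, hPγ, hlinP⟩ := hlin k
    have hβ1 : 0 ≤ 1 - β := sub_nonneg.mpr (anchorWeight_le_one γ _)
    have hc : 0 ≤ c := sub_nonneg.mpr (anchorWeight_succ_le_mul hγ0 hγ1.le k)
    have hM : 0 ≤ M := sub_nonneg.mpr (anchorWeight_le_anchorRate hγ0 hγ1 k)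
    have hdir : U (k + 1) - (1 - β) • U k - β • u ≤ (((1 - β) * M + c) * C) • 1 := calc
      U (k + 1) - (1 - β) • U k - β • u = (1 - β) • (T (U k) - U k) - β • (u - U 0) := by
        rw [hU k]; module
      _ ≤ (1 - β) • ((M * C) • 1 + anchorWeight γ k • (u - U 0)) - β • (u - U 0) :=
        sub_le_sub_right (smul_le_smul_of_nonneg_left ih hβ1) _
      _ = ((1 - β) * M * C) • 1 + c • (u - U 0) := by module
      _ ≤ ((1 - β) * M * C) • 1 + c • (C • 1) := by gcongr
      _ = (((1 - β) * M + c) * C) • 1 := by module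
    have hrate : anchorRate γ (k + 1) - β = γ * ((1 - β) * M + c) := by
      rw [anchorRate_succ hγ0 hγ1]; ring
    calc T (U (k + 1)) - U (k + 1)
        = (T (U (k + 1)) - (1 - β) • T (U k) - β • T u) + β • (u - U 0) := by
          rw [hfix]; linear_combination (norm := module) -hU k
      _ ≤ P *ᵥ (U (k + 1) - (1 - β) • U k - β • u) + β • (u - U 0) := add_le_add_left hlinP _
      _ ≤ (γ * (((1 - β) * M + c) * C)) • 1 + β • (u - U 0) :=
          add_le_add_left (mulVec_le_smul_one hP hPγ (by positivity) hdir) _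
      _ = ((anchorRate γ (k + 1) - β) * C) • 1 + β • (u - U 0) := by rw [hrate, mul_assoc]

theorem norm_anchoredIterate_residual_le {ι : Type*} [Fintype ι] {γ : ℝ} (hγ0 : 0 < γ)
    (hγ1 : γ < 1) {T : (ι → ℝ) → ι → ℝ} (hT : Monotone T) {u : ι → ℝ} (hfix : T u = u)
    {U : ℕ → ι → ℝ}
    (hU : ∀ k, U (k + 1) = anchorWeight γ (k + 1) • U 0 + (1 - anchorWeight γ (k + 1)) • T (U k))
    (h0 : U 0 ≤ T (U 0)) (hU0 : U 0 ≤ u)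
    (hlin : ∀ k, ∃ P : Matrix ι ι ℝ, (∀ i j, 0 ≤ P i j) ∧ (∀ i, ∑ j, P i j ≤ γ) ∧
      T (U (k + 1)) - (1 - anchorWeight γ (k + 1)) • T (U k) - anchorWeight γ (k + 1) • T u ≤
        P *ᵥ (U (k + 1) - (1 - anchorWeight γ (k + 1)) • U k - anchorWeight γ (k + 1) • u))
    (k : ℕ) : ‖T (U k) - U k‖ ≤ anchorRate γ k * ‖U 0 - u‖ := by
  set C := ‖U 0 - u‖
  have hw : u - U 0 ≤ C • 1 := by simpa only [C, norm_sub_rev] using Pi.le_norm_smul_one (u - U 0)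
  have hlower : U k ≤ T (U k) := anchoredIterate_le_apply hT (fun k => (anchorWeight_pos γ k).le)
    (anchorWeight_le_one γ) (anchorWeight_antitone γ) hU h0 k
  have hupper : T (U k) - U k ≤ (anchorRate γ k * C) • 1 := calc
    T (U k) - U k ≤ ((anchorRate γ k - anchorWeight γ k) * C) • 1 + anchorWeight γ k • (u - U 0) :=
      anchoredIterate_residual_le hγ0 hγ1 hT hfix hU hU0 hlin k
    _ ≤ ((anchorRate γ k - anchorWeight γ k) * C) • 1 + anchorWeight γ k • (C • 1) := by
      gcongr; exact (anchorWeight_pos γ k).le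
    _ = (anchorRate γ k * C) • 1 := by module
  have hrate : 0 ≤ anchorRate γ k :=
    (anchorWeight_pos γ k).le.trans (anchorWeight_le_anchorRate hγ0 hγ1 k)
  exact Pi.norm_le_of_nonneg_of_le_smul_one (by positivity) (sub_nonneg.mpr hlower) hupper

theorem stmt_19_general (n : ℕ) (γ : ℝ) (hγ0 : 0 < γ) (hγ1 : γ < 1)
    (TGS : (Fin n → ℝ) → (Fin n → ℝ))
    (hmono : ∀ x y : Fin n → ℝ, x ≤ y → TGS x ≤ TGS y)
    (Ustar : Fin n → ℝ) (hfix : TGS Ustar = Ustar)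
    (β : ℕ → ℝ) (hβ : ∀ k, β k = (∑ i ∈ Finset.range (k+1), (γ^(2*i))⁻¹)⁻¹)
    (U : ℕ → Fin n → ℝ)
    (hU : ∀ k : ℕ, U (k+1) = β (k+1) • U 0 + (1 - β (k+1)) • TGS (U k))
    (h0 : U 0 ≤ TGS (U 0))
    (hlin : ∀ α : ℝ, 0 ≤ α → α ≤ 1 → ∀ V Vt : Fin n → ℝ,
      ∃ P : Matrix (Fin n) (Fin n) ℝ,
        (∀ l m, 0 ≤ P l m) ∧ (∀ l, ∑ m, P l m ≤ γ) ∧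
        TGS V - (1 - α) • TGS Vt - α • TGS Ustar
          ≤ P.mulVec (V - (1 - α) • Vt - α • Ustar)) :
    U 0 ≤ Ustar ∧
    ∀ k : ℕ,
      ‖TGS (U k) - U k‖
        ≤ ((γ⁻¹ - γ) * (1 + γ - γ^(k+1))) / ((γ^(k+1))⁻¹ - γ^(k+1))
            * ‖U 0 - Ustar‖ := by
  obtain rfl : β = anchorWeight γ := funext hβ
  have hT : Monotone TGS := fun x y h => hmono x y h
  have hU0 : U 0 ≤ Ustar := by
    obtain ⟨P, hP, hPγ, hle⟩ := hlin 0 le_rfl zero_le_one (U 0) Ustar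
    refine sub_nonpos.mp (nonpos_of_le_mulVec hP hPγ hγ0.le hγ1 ?_)
    simp only [sub_zero, one_smul, zero_smul, hfix] at hle
    exact (sub_le_sub_right h0 Ustar).trans hle
  exact ⟨hU0, norm_anchoredIterate_residual_le hγ0 hγ1 hT hfix hU h0 hU0
    fun k => hlin _ (anchorWeight_pos γ _).le (anchorWeight_le_one γ _) _ _⟩

theorem stmt_19 (n : ℕ) (hn : 0 < n) (γ : ℝ) (hγ0 : 0 < γ) (hγ1 : γ < 1)
    (TGS : (Fin n → ℝ) → (Fin n → ℝ))
    (hT : ∀ x y : Fin n → ℝ, ‖TGS x - TGS y‖ ≤ γ * ‖x - y‖)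
    (hmono : ∀ x y : Fin n → ℝ, x ≤ y → TGS x ≤ TGS y)
    (Ustar : Fin n → ℝ) (hfix : TGS Ustar = Ustar)
    (β : ℕ → ℝ) (hβ : ∀ k, β k = (∑ i ∈ Finset.range (k+1), (γ^(2*i))⁻¹)⁻¹)
    (U : ℕ → Fin n → ℝ)
    (hU : ∀ k : ℕ, U (k+1) = β (k+1) • U 0 + (1 - β (k+1)) • TGS (U k))
    (h0 : U 0 ≤ TGS (U 0))
    (hlin : ∀ α : ℝ, 0 ≤ α → α ≤ 1 → ∀ V Vt : Fin n → ℝ,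
      ∃ P : Matrix (Fin n) (Fin n) ℝ,
        (∀ l m, 0 ≤ P l m) ∧ (∀ l, ∑ m, P l m ≤ γ) ∧
        TGS V - (1 - α) • TGS Vt - α • TGS Ustar
          ≤ P.mulVec (V - (1 - α) • Vt - α • Ustar)) :
    U 0 ≤ Ustar ∧
    ∀ k : ℕ,
      ‖TGS (U k) - U k‖
        ≤ ((γ⁻¹ - γ) * (1 + γ - γ^(k+1))) / ((γ^(k+1))⁻¹ - γ^(k+1))
            * ‖U 0 - Ustar‖ :=
  stmt_19_general n γ hγ0 hγ1 TGS hmono Ustar hfix β hβ U hU h0 hlin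
end
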